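/- arXiv:2004.02878 — 13 statements merged into one kernel-verified Lean document; each statement's English description precedes it below -/
import Mathlib

section
/- Let (X,d) be a compact metric space and f: X → X continuous. For every x ∈ X, the ω-limit set ω(x) is internally chain transitive: for any a, b ∈ ω(x) and any δ > 0 there is a finite sequence a = y_0, y_1, …, y_N = b with N ≥ 1, all y_i ∈ ω(x), and d(f(y_i), y_{i+1}) < δ for all i < N. -/
open Filter Metric Topology Set

def omegaSeq {X : Type*} [MetricSpace X] (u : ℕ → X) : Set X :=
  ⋂ M : ℕ, closure (u '' Set.Ioi M)

def omegaPt {X : Type*} [MetricSpace X] (f : X → X) (x : X) : Set X :=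
  omegaSeq (fun n => f^[n] x)

def omegaZ {X : Type*} [MetricSpace X] (u : ℤ → X) : Set X :=
  ⋂ M : ℕ, closure (u '' {n : ℤ | (M : ℤ) < n})

def alphaZ {X : Type*} [MetricSpace X] (u : ℤ → X) : Set X :=
  ⋂ M : ℕ, closure (u '' {n : ℤ | n < -(M : ℤ)})

/-- `A` is internally chain transitive for `f`. -/
def chainTransitive {X : Type*} [MetricSpace X] (f : X → X) (A : Set X) : Prop :=
  ∀ a ∈ A, ∀ b ∈ A, ∀ δ > (0:ℝ), ∃ N : ℕ, 1 ≤ N ∧ ∃ y : ℕ → X,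
    y 0 = a ∧ y N = b ∧ (∀ i ≤ N, y i ∈ A) ∧ ∀ i < N, dist (f (y i)) (y (i+1)) < δ

/-- `u` is a full trajectory of `f`. -/
def fullTraj {X : Type*} (f : X → X) (u : ℤ → X) : Prop := ∀ i : ℤ, f (u i) = u (i + 1)

/-- `u` is a two-sided asymptotic pseudo-orbit of `f`. -/
def twoSidedAsymptotic {X : Type*} [MetricSpace X] (f : X → X) (u : ℤ → X) : Prop :=
  Filter.Tendsto (fun i : ℤ => dist (f (u i)) (u (i + 1))) Filter.atTop (nhds 0) ∧
  Filter.Tendsto (fun i : ℤ => dist (f (u i)) (u (i + 1))) Filter.atBot (nhds 0)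

/-- The γ-limit set of a point. -/
def gammaLimit {X : Type*} [MetricSpace X] (f : X → X) (x : X) : Set X :=
  {y | y ∈ omegaPt f x ∧ ∃ (ys : ℕ → X) (ns : ℕ → ℕ), StrictMono ns ∧
    (∀ i, f^[ns i] (ys i) = x) ∧ Filter.Tendsto ys Filter.atTop (nhds y)}

/-! By compactness the orbit of `x` eventually stays within `η` of `ω(x)`, and it returns
arbitrarily late within `η` of `a` and of `b`. Replacing every point of an orbit segment running
from near `a` to near `b` by a nearby point of `ω(x)`, and its ends by `a` and `b`, gives a
`δ`-chain in `ω(x)` once `η` is small for the uniform continuity of `f`. -/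

section ChainTransitivity

variable {X : Type*} [MetricSpace X]

theorem eventually_mem_thickening_omegaSeq [CompactSpace X] (u : ℕ → X) {ε : ℝ} (hε : 0 < ε) :
    ∀ᶠ n in atTop, u n ∈ thickening ε (omegaSeq u) := by
  obtain ⟨M, hM⟩ := exists_subset_nhds_of_isCompact' (V := fun M : ℕ => closure (u '' Ioi M))
    (directed_of_isDirected_le fun _ _ h => closure_mono (image_mono (Ioi_subset_Ioi h)))
    (fun _ => isClosed_closure.isCompact) (fun _ => isClosed_closure)
    (fun y hy => isOpen_thickening.mem_nhds (self_subset_thickening hε _ hy))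
  filter_upwards [eventually_gt_atTop M] with n hn
  exact hM (subset_closure ⟨n, hn, rfl⟩)

theorem frequently_dist_lt_of_mem_omegaSeq {u : ℕ → X} {a : X} (ha : a ∈ omegaSeq u) {ε : ℝ}
    (hε : 0 < ε) : ∃ᶠ n in atTop, dist (u n) a < ε := by
  refine frequently_atTop.2 fun M => ?_
  obtain ⟨_, ⟨n, hn, rfl⟩, hdist⟩ := Metric.mem_closure_iff.1 (mem_iInter.1 ha M) ε hε
  exact ⟨n, le_of_lt hn, by rwa [dist_comm]⟩

theorem dist_apply_lt_of_forall_dist_iterate_lt {f : X → X} {ε η : ℝ}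
    (hf : ∀ p q, dist p q < η → dist (f p) (f q) < ε) {z : X} {y : ℕ → X} {N : ℕ}
    (hy : ∀ i ≤ N, dist (y i) (f^[i] z) < η) {i : ℕ} (hi : i < N) :
    dist (f (y i)) (y (i + 1)) < ε + η :=
  calc dist (f (y i)) (y (i + 1))
      ≤ dist (f (y i)) (f (f^[i] z)) + dist (f (f^[i] z)) (y (i + 1)) := dist_triangle _ _ _
    _ < ε + η := by
      refine add_lt_add (hf _ _ (hy i hi.le)) ?_
      rw [← Function.iterate_succ_apply' f i z, dist_comm]
      exact hy (i + 1) hi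

theorem chainTransitive_of_forall_exists_orbit_near {f : X → X} (hf : UniformContinuous f)
    {A : Set X}
    (h : ∀ a ∈ A, ∀ b ∈ A, ∀ η > (0 : ℝ), ∃ z N, 1 ≤ N ∧ dist a z < η ∧ dist b (f^[N] z) < η ∧
      ∀ i, ∃ w ∈ A, dist w (f^[i] z) < η) :
    chainTransitive f A := by
  intro a ha b hb δ hδ
  obtain ⟨η₀, hη₀, hfη₀⟩ := Metric.uniformContinuous_iff.1 hf (δ / 2) (half_pos hδ)
  set η := min η₀ (δ / 2)
  have hfη : ∀ p q, dist p q < η → dist (f p) (f q) < δ / 2 :=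
    fun p q hpq => hfη₀ (hpq.trans_le (min_le_left _ _))
  obtain ⟨z, N, hN, haz, hbz, hA⟩ := h a ha b hb η (lt_min hη₀ (half_pos hδ))
  choose w hwA hwz using hA
  set y : ℕ → X := fun i => if i = 0 then a else if i = N then b else w i
  have hy : ∀ i ≤ N, y i ∈ A ∧ dist (y i) (f^[i] z) < η := by
    intro i _
    simp only [y]
    split_ifs with h0 hN'
    · subst h0; exact ⟨ha, haz⟩
    · subst hN'; exact ⟨hb, hbz⟩
    · exact ⟨hwA i, hwz i⟩
  refine ⟨N, hN, y, if_pos rfl, by simp [y, Nat.one_le_iff_ne_zero.1 hN],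
    fun i hi => (hy i hi).1, fun i hi => ?_⟩
  calc dist (f (y i)) (y (i + 1)) < δ / 2 + η :=
        dist_apply_lt_of_forall_dist_iterate_lt hfη (fun i hi => (hy i hi).2) hi
    _ ≤ δ := by linarith [min_le_right η₀ (δ / 2)]

end ChainTransitivity

theorem stmt2 {X : Type*} [MetricSpace X] [CompactSpace X] (f : X → X)
    (hf : Continuous f) (x : X) :
    chainTransitive f (omegaPt f x) := by
  refine chainTransitive_of_forall_exists_orbit_near
    (CompactSpace.uniformContinuous_of_continuous hf) fun a ha b hb η hη => ?_
  set u : ℕ → X := fun n => f^[n] x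
  have hshift : ∀ n i, f^[i] (u n) = u (i + n) :=
    fun n i => (Function.iterate_add_apply f i n x).symm
  obtain ⟨M, hM⟩ := eventually_atTop.1 (eventually_mem_thickening_omegaSeq u hη)
  obtain ⟨n₁, hn₁a, hn₁M⟩ :=
    ((frequently_dist_lt_of_mem_omegaSeq ha hη).and_eventually (eventually_ge_atTop M)).exists
  obtain ⟨n₂, hn₂b, hn₁₂⟩ :=
    ((frequently_dist_lt_of_mem_omegaSeq hb hη).and_eventually (eventually_gt_atTop n₁)).exists
  refine ⟨u n₁, n₂ - n₁, by omega, by rwa [dist_comm], ?_, fun i => ?_⟩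
  · rwa [hshift, Nat.sub_add_cancel hn₁₂.le, dist_comm]
  · obtain ⟨w, hw, hdist⟩ := mem_thickening_iff.1 (hM (i + n₁) (by omega))
    exact ⟨w, hw, by rwa [hshift, dist_comm]⟩
end

section
/- Let (X,d) be a compact metric space and f: X → X continuous. For every backward trajectory ⟨x_i⟩_{i≤0} (i.e., f(x_i) = x_{i+1} for all i ≤ -1), the α-limit set α(⟨x_i⟩) is internally chain transitive. -/
open Filter Metric Topology Set

/-!
For `δ > 0` pick `ε` from uniform continuity of `f`. By compactness every sufficiently negative
`u n` is `ε`-close to `alphaZ u`, and since `a, b ∈ alphaZ u` there are indices `k < m` far in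
the past with `u k` near `a` and `u m` near `b`. Replacing each point of the orbit segment
`u k, …, u m` by a nearby point of `alphaZ u` (and the endpoints by `a` and `b`) yields a
`δ`-chain inside `alphaZ u`.
-/

section

variable {X : Type*} [MetricSpace X]

theorem frequently_dist_lt_of_mem_alphaZ {u : ℤ → X} {a : X} (ha : a ∈ alphaZ u) {ε : ℝ}
    (hε : 0 < ε) : ∃ᶠ n in atBot, dist (u n) a < ε := by
  rw [frequently_atBot]
  intro K
  obtain ⟨_, ⟨n, hn, rfl⟩, hna⟩ := Metric.mem_closure_iff.mp (mem_iInter.mp ha K.natAbs) ε hε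
  exact ⟨n, by have : n < -(K.natAbs : ℤ) := hn; omega, by rwa [dist_comm]⟩

theorem eventually_exists_dist_alphaZ_lt [CompactSpace X] (u : ℤ → X) {ε : ℝ} (hε : 0 < ε) :
    ∀ᶠ n in atBot, ∃ p ∈ alphaZ u, dist (u n) p < ε := by
  -- some member of the decreasing closed family cut out by `alphaZ u` lies in its thickening
  have hanti : Antitone fun M : ℕ => closure (u '' {n : ℤ | n < -(M : ℤ)}) := fun M M' h =>
    closure_mono <| image_mono fun n (hn : n < _) => show n < _ by omega
  obtain ⟨M, hM⟩ := exists_subset_nhds_of_isCompact' hanti.directed_ge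
    (fun _ => isClosed_closure.isCompact) (fun _ => isClosed_closure)
    (fun x hx => isOpen_thickening.mem_nhds (self_subset_thickening hε _ hx))
  filter_upwards [eventually_lt_atBot (-(M : ℤ))] with n hn
  exact mem_thickening_iff.mp (hM (subset_closure ⟨n, hn, rfl⟩))

theorem exists_seq_mem_dist_lt {A : Set X} {v : ℕ → X} {N : ℕ} {a b : X} {ε : ℝ} (hN : 0 < N)
    (ha : a ∈ A) (hb : b ∈ A) (hav : dist (v 0) a < ε) (hbv : dist (v N) b < ε)
    (hv : ∀ i, 0 < i → i < N → ∃ p ∈ A, dist (v i) p < ε) :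
    ∃ y : ℕ → X, y 0 = a ∧ y N = b ∧ ∀ i ≤ N, y i ∈ A ∧ dist (v i) (y i) < ε := by
  have hnear : ∀ i, ∃ p, i ≤ N → p ∈ A ∧ dist (v i) p < ε ∧ (i = 0 → p = a) ∧ (i = N → p = b) := by
    intro i
    rcases eq_or_ne i 0 with rfl | hi0
    · exact ⟨a, fun _ => ⟨ha, hav, fun _ => rfl, by omega⟩⟩
    rcases eq_or_ne i N with rfl | hiN
    · exact ⟨b, fun _ => ⟨hb, hbv, by omega, fun _ => rfl⟩⟩
    by_cases hiN' : i < N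
    · obtain ⟨p, hp, hpv⟩ := hv i (by omega) hiN'
      exact ⟨p, fun _ => ⟨hp, hpv, by omega, by omega⟩⟩
    · exact ⟨a, by omega⟩
  choose y hy using hnear
  exact ⟨y, (hy 0 (by omega)).2.2.1 rfl, (hy N le_rfl).2.2.2 rfl,
    fun i hi => ⟨(hy i hi).1, (hy i hi).2.1⟩⟩

theorem dist_map_lt_of_forall_dist_lt {f : X → X} {v y : ℕ → X} {N : ℕ} {ε δ : ℝ}
    (hf : ∀ x x', dist x x' < ε → dist (f x) (f x') < δ / 2) (hεδ : ε ≤ δ / 2)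
    (hv : ∀ i < N, f (v i) = v (i + 1)) (hy : ∀ i ≤ N, dist (v i) (y i) < ε) :
    ∀ i < N, dist (f (y i)) (y (i + 1)) < δ := fun i hi =>
  calc dist (f (y i)) (y (i + 1))
      ≤ dist (f (v i)) (f (y i)) + dist (v (i + 1)) (y (i + 1)) := by
        rw [← hv i hi]; exact dist_triangle_left _ _ _
    _ < δ / 2 + δ / 2 :=
        add_lt_add (hf _ _ (hy i hi.le)) ((hy (i + 1) hi).trans_le hεδ)
    _ = δ := add_halves δ

end

theorem stmt3 {X : Type*} [MetricSpace X] [CompactSpace X] (f : X → X)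
    (hf : Continuous f) (u : ℤ → X) (hu : ∀ i ≤ (-1 : ℤ), f (u i) = u (i + 1)) :
    chainTransitive f (alphaZ u) := by
  intro a ha b hb δ hδ
  obtain ⟨ε₀, hε₀, hfε₀⟩ := Metric.uniformContinuous_iff.mp
    (CompactSpace.uniformContinuous_of_continuous hf) (δ / 2) (by positivity)
  set ε := min ε₀ (δ / 2)
  have hε : 0 < ε := lt_min hε₀ (by positivity)
  obtain ⟨M, hM⟩ := eventually_atBot.mp
    ((eventually_exists_dist_alphaZ_lt u hε).and (eventually_le_atBot (-1)))
  obtain ⟨m, hmb, hmM⟩ := ((frequently_dist_lt_of_mem_alphaZ hb hε).and_eventually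
    (eventually_le_atBot M)).exists
  obtain ⟨k, hka, hkm⟩ := ((frequently_dist_lt_of_mem_alphaZ ha hε).and_eventually
    (eventually_lt_atBot m)).exists
  set N := (m - k).toNat
  have hkN : k + N = m := by omega
  obtain ⟨y, hy0, hyN, hy⟩ := exists_seq_mem_dist_lt (v := fun i : ℕ => u (k + i)) (by omega) ha hb
    (by simpa using hka) (by simpa [hkN] using hmb)
    fun i _ (hi : i < N) => (hM (k + i) (by omega)).1
  refine ⟨N, by omega, y, hy0, hyN, fun i hi => (hy i hi).1,
    dist_map_lt_of_forall_dist_lt (fun x x' h => hfε₀ (h.trans_le (min_le_left _ _)))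
      (min_le_right _ _) (fun i hi => ?_) (fun i hi => (hy i hi).2)⟩
  rw [hu _ (hM (k + i) (by omega)).2]
  congr 1
  push_cast
  ring
end

section
/- Let (X,d) be a compact metric space and f: X → X continuous. The collection ICT_f of nonempty closed internally chain transitive subsets of X is a closed subset of the hyperspace 2^X of nonempty compact subsets of X with the Hausdorff metric. -/
open Filter Metric Topology Set

theorem stmt4 {X : Type*} [MetricSpace X] [CompactSpace X] (f : X → X)
    (hf : Continuous f) :
    IsClosed {A : TopologicalSpace.NonemptyCompacts X | chainTransitive f (A : Set X)} := by
  apply IsSeqClosed.isClosed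
  intro As A hAs hlim
  intro a ha b hb δ hδ
  obtain ⟨ε, hε, hεδ, hfc⟩ : ∃ ε > (0:ℝ), ε ≤ δ/3 ∧
      ∀ x y : X, dist x y < ε → dist (f x) (f y) < δ/3 := by
    have huc := CompactSpace.uniformContinuous_of_continuous hf
    rw [Metric.uniformContinuous_iff] at huc
    obtain ⟨ε, hε, h⟩ := huc (δ/3) (by linarith)
    exact ⟨min ε (δ/3), by positivity, min_le_right _ _,
      fun x y hxy => h (lt_of_lt_of_le hxy (min_le_left _ _))⟩
  obtain ⟨n0, hn0⟩ := Metric.tendsto_atTop.1 hlim ε hε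
  have hdist : dist (As n0) A < ε := hn0 n0 le_rfl
  set B : Set X := (As n0 : Set X) with hB
  have hne : EMetric.hausdorffEdist B (A : Set X) ≠ ⊤ :=
    Metric.hausdorffEdist_ne_top_of_nonempty_of_bounded (As n0).nonempty A.nonempty
      (As n0).isCompact.isBounded A.isCompact.isBounded
  have hHD : Metric.hausdorffDist B (A : Set X) < ε := by
    rwa [Metric.NonemptyCompacts.dist_eq] at hdist
  -- find a', b' in B close to a, b
  obtain ⟨a', ha', haa'⟩ : ∃ a' ∈ B, dist a a' < ε := by
    obtain ⟨a', ha', h⟩ := Metric.exists_dist_lt_of_hausdorffDist_lt' ha hHD hne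
    exact ⟨a', ha', by rwa [dist_comm] at h⟩
  obtain ⟨b', hb', hbb'⟩ : ∃ b' ∈ B, dist b b' < ε := by
    obtain ⟨b', hb', h⟩ := Metric.exists_dist_lt_of_hausdorffDist_lt' hb hHD hne
    exact ⟨b', hb', by rwa [dist_comm] at h⟩
  -- chain in B
  obtain ⟨N, hN1, y, hy0, hyN, hyin, hychain⟩ := hAs n0 a' ha' b' hb' (δ/3) (by linarith)
  -- project the chain to A
  have hproj : ∀ i, i ≤ N → ∃ z ∈ (A : Set X), dist (y i) z < ε := by
    intro i hi
    exact Metric.exists_dist_lt_of_hausdorffDist_lt (hyin i hi) hHD hne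
  classical
  set z : ℕ → X := fun i =>
    if i = 0 then a else if i = N then b else
      if h : i ≤ N then (hproj i h).choose else a with hz
  have hN0 : N ≠ 0 := by omega
  have hzN : z N = b := by simp [hz, hN0]
  refine ⟨N, hN1, z, by simp [hz], hzN, ?_, ?_⟩
  · intro i hi
    by_cases h0 : i = 0
    · simpa [hz, h0] using ha
    by_cases hN' : i = N
    · rw [hN', hzN]; exact hb
    · simp only [hz, h0, hN', if_false, dif_pos hi]
      exact (hproj i hi).choose_spec.1
  · have hclose : ∀ i, i ≤ N → dist (y i) (z i) < ε := by
      intro i hi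
      by_cases h0 : i = 0
      · rw [h0]
        simp only [hz, if_pos rfl]
        rw [hy0, dist_comm]; exact haa'
      by_cases hN' : i = N
      · rw [hN', hzN, hyN, dist_comm]; exact hbb'
      · simp only [hz, h0, hN', if_false, dif_pos hi]
        exact (hproj i hi).choose_spec.2
    intro i hi
    have h1 : dist (f (z i)) (f (y i)) < δ/3 := by
      apply hfc
      rw [dist_comm]; exact hclose i (le_of_lt hi)
    have h2 : dist (f (y i)) (y (i+1)) < δ/3 := hychain i hi
    have h3 : dist (y (i+1)) (z (i+1)) < ε := hclose (i+1) hi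
    calc dist (f (z i)) (z (i+1))
        ≤ dist (f (z i)) (f (y i)) + dist (f (y i)) (y (i+1)) + dist (y (i+1)) (z (i+1)) :=
          dist_triangle4 _ _ _ _
      _ < δ/3 + δ/3 + ε := by linarith
      _ ≤ δ := by linarith
end

section
/- Let (X,d) be a compact metric space and f: X → X continuous. The ω-limit set of any asymptotic pseudo-orbit ⟨x_i⟩_{i≥0} (a sequence with d(f(x_i), x_{i+1}) → 0 as i → ∞) is internally chain transitive. -/
open Filter Metric Topology Set

lemma omegaSeq_attract {X : Type*} [MetricSpace X] [CompactSpace X] (u : ℕ → X)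
    {ε : ℝ} (hε : 0 < ε) :
    ∀ᶠ n in Filter.atTop, ∃ z ∈ omegaSeq u, dist (u n) z < ε := by
  by_contra h
  rw [Filter.not_eventually] at h
  obtain ⟨φ, hφ, hφ2⟩ := Filter.extraction_of_frequently_atTop h
  obtain ⟨p, -, ψ, hψ, hlim⟩ :=
    IsCompact.tendsto_subseq (x := u ∘ φ) isCompact_univ (fun n => Set.mem_univ _)
  have hp : p ∈ omegaSeq u := by
    rw [omegaSeq, Set.mem_iInter]
    intro M
    apply mem_closure_of_tendsto hlim
    filter_upwards [Filter.eventually_gt_atTop M] with j hj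
    exact ⟨φ (ψ j), lt_of_lt_of_le hj ((hφ.comp hψ).le_apply), rfl⟩
  have hev : ∀ᶠ j in Filter.atTop, dist ((u ∘ φ ∘ ψ) j) p < ε :=
    (tendsto_iff_dist_tendsto_zero.mp hlim).eventually (gt_mem_nhds hε)
  obtain ⟨j, hj⟩ := hev.exists
  exact hφ2 (ψ j) ⟨p, hp, hj⟩

theorem stmt5 {X : Type*} [MetricSpace X] [CompactSpace X] (f : X → X)
    (hf : Continuous f) (u : ℕ → X)
    (hu : Filter.Tendsto (fun i => dist (f (u i)) (u (i + 1))) Filter.atTop (nhds 0)) :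
    chainTransitive f (omegaSeq u) := by
  intro a ha b hb δ hδ
  have hfu : UniformContinuous f := CompactSpace.uniformContinuous_of_continuous hf
  obtain ⟨ε₁, hε₁, hεf⟩ := Metric.uniformContinuous_iff.mp hfu (δ/3) (by linarith)
  set ε := min ε₁ (δ/3) with hεdef
  have hε : 0 < ε := lt_min hε₁ (by linarith)
  have hεle : ε ≤ δ/3 := min_le_right _ _
  have hεle1 : ε ≤ ε₁ := min_le_left _ _
  have h1 := omegaSeq_attract u hε
  have h2 : ∀ᶠ n in Filter.atTop, dist (f (u n)) (u (n+1)) < ε :=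
    hu.eventually (gt_mem_nhds hε)
  obtain ⟨M, hM⟩ := Filter.eventually_atTop.mp (h1.and h2)
  -- choose shadowing points in omegaSeq u
  have hgex : ∀ n, ∃ z, (M ≤ n → z ∈ omegaSeq u ∧ dist (u n) z < ε) := by
    intro n
    by_cases hn : M ≤ n
    · obtain ⟨z, hz, hzd⟩ := (hM n hn).1
      exact ⟨z, fun _ => ⟨hz, hzd⟩⟩
    · exact ⟨a, fun h => absurd h hn⟩
  choose g hg using hgex
  -- pick m > M close to a, k > m close to b
  have ha' : a ∈ closure (u '' Set.Ioi M) := by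
    have := Set.mem_iInter.mp ha M; exact this
  obtain ⟨_, ⟨m, hmM, rfl⟩, hma⟩ := Metric.mem_closure_iff.mp ha' ε hε
  have hb' : b ∈ closure (u '' Set.Ioi m) := by
    have := Set.mem_iInter.mp hb m; exact this
  obtain ⟨_, ⟨k, hkm, rfl⟩, hkb⟩ := Metric.mem_closure_iff.mp hb' ε hε
  have hmM2 : M < m := hmM
  have hkm2 : m < k := hkm
  have hmM' : M ≤ m := le_of_lt hmM2
  have hN1 : 1 ≤ k - m := by omega
  refine ⟨k - m, hN1, fun i => if i = 0 then a else if i = k - m then b else g (m + i), ?_, ?_, ?_, ?_⟩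
  · simp
  · have : k - m ≠ 0 := by omega
    simp [this]
  · intro i hi
    by_cases h0 : i = 0
    · simpa [h0] using ha
    · by_cases hN : i = k - m
      · have hne : k - m ≠ 0 := by omega
        simp [h0, hN, hne, hb]
      · simp only [h0, hN, if_false]
        exact (hg (m + i) (by omega)).1
  · intro i hi
    have hy : ∀ j ≤ k - m, dist (u (m + j))
        (if j = 0 then a else if j = k - m then b else g (m + j)) < ε := by
      intro j hj
      by_cases h0 : j = 0
      · simp only [h0, if_pos rfl, Nat.add_zero]
        rw [dist_comm]; exact hma
      · by_cases hN : j = k - m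
        · rw [if_neg h0, if_pos hN, show m + j = k by omega, dist_comm]
          exact hkb
        · rw [if_neg h0, if_neg hN]
          exact (hg (m + j) (by omega)).2
    have hyi := hy i (le_of_lt hi)
    have hyi1 := hy (i + 1) (by omega)
    set yi := (if i = 0 then a else if i = k - m then b else g (m + i)) with hyidef
    set yi1 := (if i + 1 = 0 then a else if i + 1 = k - m then b else g (m + (i + 1))) with hyi1def
    have t1 : dist (f yi) (f (u (m + i))) < δ/3 := by
      apply hεf
      rw [dist_comm]
      exact lt_of_lt_of_le hyi hεle1
    have t2 : dist (f (u (m + i))) (u (m + i + 1)) < ε := (hM (m + i) (by omega)).2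
    have t3 : dist (u (m + i + 1)) yi1 < ε := by
      have : m + (i + 1) = m + i + 1 := by omega
      rw [← this]; exact hyi1
    calc dist (f yi) yi1 ≤ dist (f yi) (f (u (m + i))) + dist (f (u (m + i))) (u (m + i + 1))
          + dist (u (m + i + 1)) yi1 := dist_triangle4 _ _ _ _
      _ < δ/3 + ε + ε := by linarith
      _ ≤ δ := by linarith
end

section
/- Let (X,d) be a compact metric space and f: X → X continuous. The α-limit set of any backward asymptotic pseudo-orbit ⟨x_i⟩_{i≤0} (a sequence with d(f(x_i), x_{i+1}) → 0 as i → -∞) is internally chain transitive. -/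
open Filter Metric Topology Set

lemma alphaZ_near {X : Type*} [MetricSpace X] {u : ℤ → X} {a : X}
    (ha : a ∈ alphaZ u) {ε : ℝ} (hε : 0 < ε) (B : ℤ) :
    ∃ n ≤ B, dist (u n) a < ε := by
  have h := Set.mem_iInter.mp ha ((-B).toNat + 1)
  rw [Metric.mem_closure_iff] at h
  obtain ⟨y, hy, hd⟩ := h ε hε
  obtain ⟨n, hn, rfl⟩ := hy
  refine ⟨n, ?_, by rwa [dist_comm]⟩
  simp only [Set.mem_setOf_eq] at hn
  omega

lemma tail_near_alphaZ {X : Type*} [MetricSpace X] [CompactSpace X] (u : ℤ → X)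
    {ε : ℝ} (hε : 0 < ε) :
    ∃ B : ℤ, ∀ i ≤ B, ∃ z ∈ alphaZ u, dist (u i) z < ε := by
  by_contra h
  push_neg at h
  have h' : ∀ k : ℕ, ∃ i ≤ -(k:ℤ), ∀ z ∈ alphaZ u, ε ≤ dist (u i) z := by
    intro k
    obtain ⟨i, hi, hz⟩ := h (-(k:ℤ))
    exact ⟨i, hi, hz⟩
  choose g hg1 hg2 using h'
  obtain ⟨z, -, φ, hφ, hconv⟩ :=
    isCompact_univ.tendsto_subseq (x := fun k => u (g k)) (fun k => Set.mem_univ _)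
  have hzA : z ∈ alphaZ u := by
    rw [alphaZ, Set.mem_iInter]
    intro M
    refine mem_closure_of_tendsto hconv ?_
    filter_upwards [eventually_ge_atTop (M+1)] with k hk
    refine ⟨g (φ k), ?_, rfl⟩
    have h1 := hg1 (φ k)
    have h2 := hφ.le_apply (x := k)
    simp only [Set.mem_setOf_eq]
    omega
  have hd : Tendsto (fun k => dist (u (g (φ k))) z) atTop (𝓝 0) := by
    have := hconv.dist (tendsto_const_nhds (x := z) (f := atTop))
    simpa using this
  have : ∀ᶠ k in atTop, dist (u (g (φ k))) z < ε :=
    hd.eventually_lt_const hε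
  obtain ⟨k, hk⟩ := this.exists
  exact absurd (hg2 (φ k) z hzA) (not_le.mpr hk)

theorem stmt6 {X : Type*} [MetricSpace X] [CompactSpace X] (f : X → X)
    (hf : Continuous f) (u : ℤ → X)
    (hu : Filter.Tendsto (fun i : ℤ => dist (f (u i)) (u (i + 1))) Filter.atBot (nhds 0)) :
    chainTransitive f (alphaZ u) := by
  intro a ha b hb δ hδ
  obtain ⟨ε0, hε0, himp⟩ := Metric.uniformContinuous_iff.mp
    (CompactSpace.uniformContinuous_of_continuous hf) (δ/3) (by linarith)
  set ε := min ε0 (δ/3) with hεdef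
  have hεpos : 0 < ε := lt_min hε0 (by linarith)
  have hεε0 : ε ≤ ε0 := min_le_left _ _
  have hεδ : ε ≤ δ/3 := min_le_right _ _
  obtain ⟨b0, hb0⟩ := eventually_atBot.mp
    (hu.eventually_lt_const (show (0:ℝ) < δ/3 by linarith))
  obtain ⟨B0, hB0⟩ := tail_near_alphaZ u hεpos
  have hwex : ∀ i : ℤ, ∃ z, i ≤ B0 → z ∈ alphaZ u ∧ dist (u i) z < ε := by
    intro i
    by_cases hi : i ≤ B0
    · obtain ⟨z, hz1, hz2⟩ := hB0 i hi
      exact ⟨z, fun _ => ⟨hz1, hz2⟩⟩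
    · exact ⟨a, fun h => absurd h hi⟩
  choose w hw using hwex
  set B := min B0 b0 with hBdef
  have hBB0 : B ≤ B0 := min_le_left _ _
  have hBb0 : B ≤ b0 := min_le_right _ _
  obtain ⟨m, hm1, hm2⟩ := alphaZ_near hb hεpos B
  obtain ⟨n, hn1, hn2⟩ := alphaZ_near ha hεpos (m - 1)
  set N := (m - n).toNat with hNdef
  have hNZ : (N:ℤ) = m - n := Int.toNat_of_nonneg (by omega)
  have hN1 : 1 ≤ N := by omega
  set y : ℕ → X := fun j => if j = 0 then a else if j = N then b else w (n + j) with hy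
  have key : ∀ j ≤ N, y j ∈ alphaZ u ∧ dist (u (n + j)) (y j) < ε := by
    intro j hj
    rcases eq_or_ne j 0 with rfl | hj0
    · refine ⟨by simpa [hy] using ha, ?_⟩
      simpa [hy] using hn2
    rcases eq_or_ne j N with rfl | hjN
    · have hm : n + (N:ℤ) = m := by omega
      simp only [hy, if_neg hj0, if_pos rfl]
      rw [hm]
      exact ⟨hb, hm2⟩
    · have hle : n + (j:ℤ) ≤ B0 := by omega
      simp only [hy, if_neg hj0, if_neg hjN]
      exact hw (n + j) hle
  have step : ∀ i < N, dist (f (y i)) (y (i+1)) < δ := by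
    intro i hi
    obtain ⟨hiA, hid⟩ := key i hi.le
    obtain ⟨hi1A, hi1d⟩ := key (i+1) (by omega)
    have hps : dist (f (u (n + i))) (u (n + i + 1)) < δ/3 := hb0 (n + i) (by omega)
    have h1 : dist (f (y i)) (f (u (n + i))) < δ/3 :=
      himp (by rw [dist_comm]; exact lt_of_lt_of_le hid hεε0)
    have h2 : dist (u (n + (i:ℤ) + 1)) (y (i+1)) < ε := by
      have hcast : n + ((i:ℕ)+1 : ℕ) = n + (i:ℤ) + 1 := by push_cast; ring
      rw [← hcast]; exact hi1d
    calc dist (f (y i)) (y (i+1))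
        ≤ dist (f (y i)) (f (u (n + i))) + dist (f (u (n + i))) (u (n + i + 1))
          + dist (u (n + i + 1)) (y (i+1)) := dist_triangle4 _ _ _ _
      _ < δ/3 + δ/3 + ε := by
          gcongr
      _ ≤ δ := by linarith
  refine ⟨N, hN1, y, by simp [hy], ?_, fun i hi => (key i hi).1, step⟩
  simp [hy, show N ≠ 0 by omega]
end

section
/- Let (X,d) be a compact metric space and f: X → X continuous. For any nonempty closed internally chain transitive set A ⊆ X and any ε > 0, there exists a two-sided sequence ⟨a_i⟩_{i∈ℤ} contained in A such that d(f(a_i), a_{i+1}) < ε for all i ∈ ℤ, d(f(a_i), a_{i+1}) → 0 as i → ±∞, and both the α-limit set and the ω-limit set of ⟨a_i⟩ equal A. -/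
/-!
Enumerate a countable dense subset of `A` so that each of its points recurs infinitely often, and
join consecutive points of the enumeration by chains in `A` whose step errors `δₖ < ε` tend to `0`.
Concatenating these chains gives the forward half of the sequence, with ω-limit set `A`;
concatenating the chains that run backwards gives the backward half, and the two halves meet at the
first point of the enumeration.
-/

open Filter Metric Topology Set

section Chains

variable {X : Type*}

/-- `chainTransitive f A` says that `ChainWithin (fun p q => dist (f p) q < δ) A a b` for all
`a b ∈ A` and `δ > 0`. -/
def ChainWithin (R : X → X → Prop) (A : Set X) (a b : X) : Prop :=
  ∃ N : ℕ, 1 ≤ N ∧ ∃ y : ℕ → X,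
    y 0 = a ∧ y N = b ∧ (∀ i ≤ N, y i ∈ A) ∧ ∀ i < N, R (y i) (y (i + 1))

theorem ChainWithin.flip {R : X → X → Prop} {A : Set X} {a b : X} (h : ChainWithin R A a b) :
    ChainWithin (flip R) A b a := by
  obtain ⟨N, hN, y, hy0, hyN, hyA, hyR⟩ := h
  refine ⟨N, hN, fun i => y (N - i), by simpa using hyN, by simpa using hy0,
    fun i _ => hyA _ (Nat.sub_le _ _), fun i hi => ?_⟩
  have hi' : N - (i + 1) + 1 = N - i := by omega
  simpa only [Function.flip_def, hi'] using hyR (N - (i + 1)) (by omega)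

end Chains

section Concatenation

variable {X : Type*} {N : ℕ → ℕ}

/-- The time at which the `k`-th of a sequence of chains of lengths `N 0, N 1, …` starts. -/
def chainOffset (N : ℕ → ℕ) (k : ℕ) : ℕ := ∑ j ∈ Finset.range k, N j

def chainIndex (N : ℕ → ℕ) (n : ℕ) : ℕ := Nat.findGreatest (fun k => chainOffset N k ≤ n) n

def concatChains (N : ℕ → ℕ) (c : ℕ → ℕ → X) (n : ℕ) : X :=
  c (chainIndex N n) (n - chainOffset N (chainIndex N n))

theorem chainOffset_succ (N : ℕ → ℕ) (k : ℕ) :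
    chainOffset N (k + 1) = chainOffset N k + N k :=
  Finset.sum_range_succ _ _

theorem chainOffset_strictMono (hN : ∀ k, 0 < N k) : StrictMono (chainOffset N) :=
  strictMono_nat_of_lt_succ fun k => by rw [chainOffset_succ]; exact Nat.lt_add_of_pos_right (hN k)

theorem le_chainOffset (hN : ∀ k, 0 < N k) (k : ℕ) : k ≤ chainOffset N k :=
  (chainOffset_strictMono hN).le_apply

theorem chainOffset_chainIndex_le (N : ℕ → ℕ) (n : ℕ) : chainOffset N (chainIndex N n) ≤ n :=
  Nat.findGreatest_spec (P := fun k => chainOffset N k ≤ n) (Nat.zero_le n) (by simp [chainOffset])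

theorem lt_chainOffset_chainIndex_succ (hN : ∀ k, 0 < N k) (n : ℕ) :
    n < chainOffset N (chainIndex N n + 1) := by
  by_contra! h
  have hle : chainIndex N n + 1 ≤ n := (le_chainOffset hN _).trans h
  have := Nat.le_findGreatest (P := fun k => chainOffset N k ≤ n) hle h
  exact (chainIndex N n).lt_succ_self.not_ge this

theorem chainIndex_eq (hN : ∀ k, 0 < N k) {n k : ℕ} (h₁ : chainOffset N k ≤ n)
    (h₂ : n < chainOffset N (k + 1)) : chainIndex N n = k := by
  have hmono := chainOffset_strictMono hN
  have hlt : k < chainIndex N n + 1 :=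
    hmono.lt_iff_lt.mp (h₁.trans_lt (lt_chainOffset_chainIndex_succ hN n))
  have hgt : chainIndex N n < k + 1 :=
    hmono.lt_iff_lt.mp ((chainOffset_chainIndex_le N n).trans_lt h₂)
  omega

theorem chainIndex_chainOffset (hN : ∀ k, 0 < N k) (k : ℕ) :
    chainIndex N (chainOffset N k) = k :=
  chainIndex_eq hN le_rfl (chainOffset_strictMono hN k.lt_succ_self)

theorem chainIndex_mono (N : ℕ → ℕ) : Monotone (chainIndex N) := fun _ _ hmn =>
  Nat.findGreatest_mono (fun _ hk => hk.trans hmn) hmn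

theorem tendsto_chainIndex_atTop (hN : ∀ k, 0 < N k) : Tendsto (chainIndex N) atTop atTop :=
  (chainIndex_mono N).tendsto_atTop_atTop fun k => ⟨chainOffset N k, (chainIndex_chainOffset hN k).ge⟩

theorem concatChains_chainOffset (hN : ∀ k, 0 < N k) (c : ℕ → ℕ → X) (k : ℕ) :
    concatChains N c (chainOffset N k) = c k 0 := by
  simp [concatChains, chainIndex_chainOffset hN]

theorem concatChains_step (hN : ∀ k, 0 < N k) {c : ℕ → ℕ → X}
    (hlink : ∀ k, c k (N k) = c (k + 1) 0) (n : ℕ) :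
    ∃ j < N (chainIndex N n), concatChains N c n = c (chainIndex N n) j ∧
      concatChains N c (n + 1) = c (chainIndex N n) (j + 1) := by
  have hk₁ := chainOffset_chainIndex_le N n
  have hk₂ := lt_chainOffset_chainIndex_succ hN n
  set k := chainIndex N n
  rw [chainOffset_succ] at hk₂
  refine ⟨n - chainOffset N k, by omega, rfl, ?_⟩
  rcases (show n + 1 ≤ chainOffset N k + N k from hk₂).lt_or_eq with hlt | heq
  · have hidx : chainIndex N (n + 1) = k :=
      chainIndex_eq hN (by omega) (by rw [chainOffset_succ]; exact hlt)
    simp only [concatChains, hidx]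
    congr 1
    omega
  · have hidx : chainIndex N (n + 1) = k + 1 := by
      rw [heq, ← chainOffset_succ, chainIndex_chainOffset hN]
    simp only [concatChains, hidx]
    rw [chainOffset_succ, ← heq, Nat.sub_self, ← hlink]
    congr 1
    omega

end Concatenation

/-- A sequence running through chains `x 0 ⇝ x 1 ⇝ x 2 ⇝ ⋯`, the `k`-th one along the relation
`R k`; `idx n` is the chain that the step from time `n` to `n + 1` belongs to. -/
theorem exists_seq_of_chainWithin {X : Type*} {R : ℕ → X → X → Prop} {A : Set X} {x : ℕ → X}
    (h : ∀ k, ChainWithin (R k) A (x k) (x (k + 1))) :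
    ∃ (u : ℕ → X) (idx : ℕ → ℕ), Tendsto idx atTop atTop ∧ (∀ n, u n ∈ A) ∧
      (∀ n, R (idx n) (u n) (u (n + 1))) ∧ u 0 = x 0 ∧ ∀ k, ∃ n ≥ k, u n = x k := by
  choose N hN y hy0 hyN hyA hyR using h
  have hlink : ∀ k, y k (N k) = y (k + 1) 0 := fun k => (hyN k).trans (hy0 (k + 1)).symm
  have hvisit : ∀ k, concatChains N y (chainOffset N k) = x k := fun k =>
    (concatChains_chainOffset hN y k).trans (hy0 k)
  refine ⟨concatChains N y, chainIndex N, tendsto_chainIndex_atTop hN, fun n => ?_,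
    fun n => ?_, hvisit 0, fun k => ⟨chainOffset N k, le_chainOffset hN k, hvisit k⟩⟩
  · obtain ⟨j, hj, hu, -⟩ := concatChains_step hN hlink n
    exact hu ▸ hyA _ j hj.le
  · obtain ⟨j, hj, hu, hu'⟩ := concatChains_step hN hlink n
    exact hu ▸ hu' ▸ hyR _ j hj

theorem exists_seq_frequently_dense {X : Type*} [TopologicalSpace X]
    [TopologicalSpace.PseudoMetrizableSpace X] {A : Set X} (hne : A.Nonempty)
    (hsep : TopologicalSpace.IsSeparable A) :
    ∃ x : ℕ → X, (∀ k, x k ∈ A) ∧ ∀ M, A ⊆ closure (x '' Ici M) := by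
  obtain ⟨t, htA, htc, hAt⟩ := hsep.exists_countable_dense_subset
  obtain ⟨d, rfl⟩ := htc.exists_eq_range (closure_nonempty_iff.mp (hne.mono hAt))
  -- `Nat.unpair` makes every point of the dense sequence `d` recur infinitely often.
  refine ⟨fun k => d (Nat.unpair k).1, fun k => htA (mem_range_self _), fun M => ?_⟩
  refine hAt.trans (closure_mono ?_)
  rintro _ ⟨j, rfl⟩
  exact ⟨Nat.pair j M, Nat.right_le_pair j M, by simp⟩

section LimitSets

variable {X : Type*} [MetricSpace X] {a : ℤ → X} {A : Set X}

theorem omegaZ_subset (hA : IsClosed A) (ha : ∀ i, a i ∈ A) : omegaZ a ⊆ A := fun _ hp =>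
  closure_minimal (image_subset_iff.mpr fun i _ => ha i) hA (mem_iInter.mp hp 0)

theorem alphaZ_subset (hA : IsClosed A) (ha : ∀ i, a i ∈ A) : alphaZ a ⊆ A := fun _ hp =>
  closure_minimal (image_subset_iff.mpr fun i _ => ha i) hA (mem_iInter.mp hp 0)

theorem subset_omegaZ {x : ℕ → X} (hx : ∀ M, A ⊆ closure (x '' Ici M))
    (hvisit : ∀ k, ∃ n : ℕ, k ≤ n ∧ a n = x k) : A ⊆ omegaZ a := fun _ hp =>
  mem_iInter.mpr fun M => closure_mono (by
    rintro _ ⟨k, hk, rfl⟩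
    obtain ⟨n, hkn, hn⟩ := hvisit k
    exact ⟨n, by simp only [mem_Ici] at hk; simp only [mem_ofPred_eq]; omega, hn⟩) (hx (M + 1) hp)

theorem subset_alphaZ {x : ℕ → X} (hx : ∀ M, A ⊆ closure (x '' Ici M))
    (hvisit : ∀ k, ∃ n : ℕ, k ≤ n ∧ a (-n) = x k) : A ⊆ alphaZ a := fun _ hp =>
  mem_iInter.mpr fun M => closure_mono (by
    rintro _ ⟨k, hk, rfl⟩
    obtain ⟨n, hkn, hn⟩ := hvisit k
    exact ⟨-n, by simp only [mem_Ici] at hk; simp only [mem_ofPred_eq]; omega, hn⟩) (hx (M + 1) hp)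

end LimitSets

theorem Int.tendsto_atTop_of_natCast {α : Type*} {g : ℤ → α} {l : Filter α}
    (h : Tendsto (fun n : ℕ => g n) atTop l) : Tendsto g atTop l := by
  rwa [← Nat.map_cast_int_atTop, tendsto_map'_iff]

theorem Int.tendsto_atBot_of_negSucc {α : Type*} {g : ℤ → α} {l : Filter α}
    (h : Tendsto (fun n : ℕ => g (Int.negSucc n)) atTop l) : Tendsto g atBot l := by
  have : Tendsto (fun n : ℕ => g (-n)) atTop l := by
    refine (tendsto_add_atTop_iff_nat 1).mp ?_
    simpa only [Int.negSucc_eq, Nat.cast_succ] using h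
  simpa [Function.comp_def] using
    (Int.tendsto_atTop_of_natCast (g := fun i => g (-i)) this).comp tendsto_neg_atBot_atTop

section Glue

variable {X : Type*}

def gluedSeq (u v : ℕ → X) (i : ℤ) : X := if 0 ≤ i then u i.toNat else v (-i).toNat

variable {u v : ℕ → X}

@[simp]
theorem gluedSeq_natCast (n : ℕ) : gluedSeq u v n = u n := by
  simp [gluedSeq]

@[simp]
theorem gluedSeq_negSucc (n : ℕ) : gluedSeq u v (Int.negSucc n) = v (n + 1) := by
  simp [gluedSeq, Int.neg_negSucc]

theorem gluedSeq_neg_natCast (h : u 0 = v 0) (n : ℕ) : gluedSeq u v (-n) = v n := by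
  rcases n.eq_zero_or_pos with rfl | hn
  · simpa [gluedSeq] using h
  · simp [gluedSeq, hn.ne']

theorem gluedSeq_natCast_add_one (n : ℕ) : gluedSeq u v (n + 1) = u (n + 1) := by
  exact_mod_cast gluedSeq_natCast (n + 1)

theorem gluedSeq_negSucc_add_one (h : u 0 = v 0) (n : ℕ) :
    gluedSeq u v (Int.negSucc n + 1) = v n := by
  rw [Int.negSucc_eq, neg_add, neg_add_cancel_right, gluedSeq_neg_natCast h]

theorem gluedSeq_mem {A : Set X} (hu : ∀ n, u n ∈ A) (hv : ∀ n, v n ∈ A) (i : ℤ) :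
    gluedSeq u v i ∈ A := by
  rcases i with n | n
  exacts [hu n, hv (n + 1)]

variable [MetricSpace X] {f : X → X}

theorem dist_gluedSeq_lt (h : u 0 = v 0) {ε : ℝ} (hu : ∀ n, dist (f (u n)) (u (n + 1)) < ε)
    (hv : ∀ n, dist (f (v (n + 1))) (v n) < ε) (i : ℤ) :
    dist (f (gluedSeq u v i)) (gluedSeq u v (i + 1)) < ε := by
  rcases i with n | n
  · simpa [gluedSeq_natCast_add_one] using hu n
  · simpa [gluedSeq_negSucc_add_one h] using hv n

theorem twoSidedAsymptotic_gluedSeq (h : u 0 = v 0)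
    (hu : Tendsto (fun n => dist (f (u n)) (u (n + 1))) atTop (𝓝 0))
    (hv : Tendsto (fun n => dist (f (v (n + 1))) (v n)) atTop (𝓝 0)) :
    twoSidedAsymptotic f (gluedSeq u v) :=
  ⟨Int.tendsto_atTop_of_natCast (by simpa [gluedSeq_natCast_add_one] using hu),
    Int.tendsto_atBot_of_negSucc (by simpa [gluedSeq_negSucc_add_one h] using hv)⟩

end Glue

theorem stmt7_general {X : Type*} [MetricSpace X] [CompactSpace X] (f : X → X)
    (A : Set X) (hA : A.Nonempty) (hAc : IsClosed A)
    (hAi : chainTransitive f A) (ε : ℝ) (hε : 0 < ε) :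
    ∃ a : ℤ → X, (∀ i, a i ∈ A) ∧ (∀ i, dist (f (a i)) (a (i + 1)) < ε) ∧
      twoSidedAsymptotic f a ∧ alphaZ a = A ∧ omegaZ a = A := by
  obtain ⟨x, hxA, hx⟩ := exists_seq_frequently_dense hA hAc.isCompact.isSeparable
  obtain ⟨δ, -, hδ, hδ0⟩ := exists_seq_strictAnti_tendsto' hε
  obtain ⟨u, ι, hι, huA, hu, hu0, hux⟩ := exists_seq_of_chainWithin
    (R := fun k p q => dist (f p) q < δ k) fun k => hAi _ (hxA k) _ (hxA (k + 1)) _ (hδ k).1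
  obtain ⟨v, κ, hκ, hvA, hv, hv0, hvx⟩ := exists_seq_of_chainWithin
    (R := fun k p q => dist (f q) p < δ k) fun k =>
      ChainWithin.flip (hAi _ (hxA (k + 1)) _ (hxA k) _ (hδ k).1)
  have huv : u 0 = v 0 := hu0.trans hv0.symm
  have hmem := gluedSeq_mem huA hvA
  refine ⟨gluedSeq u v, hmem,
    dist_gluedSeq_lt huv (fun n => (hu n).trans (hδ _).2) (fun n => (hv n).trans (hδ _).2),
    twoSidedAsymptotic_gluedSeq huv
      (squeeze_zero (fun _ => dist_nonneg) (fun n => (hu n).le) (hδ0.comp hι))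
      (squeeze_zero (fun _ => dist_nonneg) (fun n => (hv n).le) (hδ0.comp hκ)),
    (alphaZ_subset hAc hmem).antisymm
      (subset_alphaZ hx (by simpa [gluedSeq_neg_natCast huv] using hvx)),
    (omegaZ_subset hAc hmem).antisymm (subset_omegaZ hx (by simpa using hux))⟩

theorem stmt7 {X : Type*} [MetricSpace X] [CompactSpace X] (f : X → X)
    (hf : Continuous f) (A : Set X) (hA : A.Nonempty) (hAc : IsClosed A)
    (hAi : chainTransitive f A) (ε : ℝ) (hε : 0 < ε) :
    ∃ a : ℤ → X, (∀ i, a i ∈ A) ∧ (∀ i, dist (f (a i)) (a (i + 1)) < ε) ∧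
      twoSidedAsymptotic f a ∧ alphaZ a = A ∧ omegaZ a = A :=
  stmt7_general f A hA hAc hAi ε hε
end

section
/- Let (X,d) be a compact metric space and f: X → X continuous. If (X,f) has limit shadowing, then every nonempty closed internally chain transitive set is the ω-limit set of some point; consequently ω_f = ICT_f. -/
open Filter Metric Topology Set

section Aux
variable {X : Type*} [MetricSpace X]

lemma mem_omegaSeq_iff {u : ℕ → X} {y : X} :
    y ∈ omegaSeq u ↔ ∀ ε > (0:ℝ), ∀ M : ℕ, ∃ n, M < n ∧ dist (u n) y < ε := by
  simp only [omegaSeq, Set.mem_iInter, Metric.mem_closure_iff]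
  constructor
  · intro h ε hε M
    obtain ⟨b, ⟨n, hn, rfl⟩, hb⟩ := h M ε hε
    exact ⟨n, hn, by rwa [dist_comm]⟩
  · intro h M ε hε
    obtain ⟨n, hn, hd⟩ := h ε hε M
    exact ⟨u n, ⟨n, hn, rfl⟩, by rwa [dist_comm]⟩

lemma omegaSeq_subset_of_asymp {u v : ℕ → X}
    (h : Tendsto (fun n => dist (u n) (v n)) atTop (nhds 0)) :
    omegaSeq u ⊆ omegaSeq v := by
  intro y hy
  rw [mem_omegaSeq_iff] at hy ⊢
  intro ε hε M
  obtain ⟨K, hK⟩ := (h.eventually_lt_const (show (0:ℝ) < ε/2 by linarith)).exists_forall_of_atTop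
  obtain ⟨n, hn, hd⟩ := hy (ε/2) (by linarith) (max M K)
  refine ⟨n, lt_of_le_of_lt (le_max_left _ _) hn, ?_⟩
  have h1 : dist (u n) (v n) < ε/2 := hK n (le_of_lt (lt_of_le_of_lt (le_max_right _ _) hn))
  calc dist (v n) y ≤ dist (v n) (u n) + dist (u n) y := dist_triangle _ _ _
    _ < ε/2 + ε/2 := by rw [dist_comm (v n)]; linarith
    _ = ε := by ring

lemma mem_omegaSeq_of_subseq {u : ℕ → X} {y : X} {φ : ℕ → ℕ} (hφ : StrictMono φ)
    (h : Tendsto (fun k => u (φ k)) atTop (nhds y)) : y ∈ omegaSeq u := by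
  rw [mem_omegaSeq_iff]
  intro ε hε M
  obtain ⟨K, hK⟩ := Metric.tendsto_atTop.mp h ε hε
  refine ⟨φ (max K (M+1)), ?_, hK _ (le_max_left _ _)⟩
  exact lt_of_lt_of_le (Nat.lt_succ_self M) (le_trans (le_max_right _ _) (hφ.le_apply))

lemma omegaSeq_closed (u : ℕ → X) : IsClosed (omegaSeq u) :=
  isClosed_iInter fun _ => isClosed_closure

lemma omegaSeq_nonempty [CompactSpace X] (u : ℕ → X) : (omegaSeq u).Nonempty := by
  obtain ⟨y, -, φ, hφ, hy⟩ := isCompact_univ.tendsto_subseq (fun n => Set.mem_univ (u n))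
  exact ⟨y, mem_omegaSeq_of_subseq hφ hy⟩

lemma infDist_orbit_tendsto [CompactSpace X] (f : X → X) (z : X) :
    Tendsto (fun n => Metric.infDist (f^[n] z) (omegaPt f z)) atTop (nhds 0) := by
  by_contra hcon
  rw [Metric.tendsto_atTop] at hcon
  push_neg at hcon
  obtain ⟨ε, hε, hfr⟩ := hcon
  have hfr' : ∃ᶠ n in atTop, ε ≤ Metric.infDist (f^[n] z) (omegaPt f z) := by
    rw [Filter.frequently_atTop]
    intro N
    obtain ⟨n, hn, hd⟩ := hfr N
    refine ⟨n, hn, ?_⟩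
    rw [Real.dist_eq, sub_zero, abs_of_nonneg Metric.infDist_nonneg] at hd
    exact hd
  obtain ⟨φ, hφ, hφp⟩ := Filter.extraction_of_frequently_atTop hfr'
  obtain ⟨y, -, ψ, hψ, hy⟩ := isCompact_univ.tendsto_subseq
    (fun k => Set.mem_univ (f^[φ k] z))
  have hyA : y ∈ omegaPt f z := mem_omegaSeq_of_subseq (hφ.comp hψ) hy
  have h1 : ε ≤ Metric.infDist y (omegaPt f z) := by
    refine ge_of_tendsto (((Metric.continuous_infDist_pt (omegaPt f z)).tendsto y).comp hy) ?_
    exact Filter.Eventually.of_forall fun k => hφp (ψ k)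
  rw [Metric.infDist_zero_of_mem hyA] at h1
  linarith

lemma chainTransitive_omegaPt [CompactSpace X] {f : X → X} (hf : Continuous f) (z : X) :
    chainTransitive f (omegaPt f z) := by
  intro a ha b hb δ hδ
  set A := omegaPt f z with hA
  have hAne : A.Nonempty := ⟨a, ha⟩
  -- modulus of uniform continuity
  obtain ⟨η₀, hη₀, hmod₀⟩ := Metric.uniformContinuous_iff.mp
    (CompactSpace.uniformContinuous_of_continuous hf) (δ/3) (by linarith)
  set η : ℝ := min η₀ (δ/3) with hηdef
  have hη : 0 < η := lt_min hη₀ (by linarith)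
  have hηδ : η ≤ δ/3 := min_le_right _ _
  have hmod : ∀ x y : X, dist x y < η → dist (f x) (f y) < δ/3 := fun x y h =>
    hmod₀ (lt_of_lt_of_le h (min_le_left _ _))
  -- orbit gets η-close to A eventually
  obtain ⟨N₀, hN₀⟩ := Metric.tendsto_atTop.mp (infDist_orbit_tendsto f z) η hη
  have horb : ∀ n, N₀ ≤ n → ∃ w ∈ A, dist (f^[n] z) w < η := by
    intro n hn
    have := hN₀ n hn
    rw [Real.dist_eq, sub_zero, abs_of_nonneg Metric.infDist_nonneg] at this
    exact (Metric.infDist_lt_iff hAne).mp this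
  obtain ⟨n₁, hn₁M, hn₁⟩ := mem_omegaSeq_iff.mp ha η hη N₀
  obtain ⟨n₂, hn₂M, hn₂⟩ := mem_omegaSeq_iff.mp hb η hη n₁
  choose w hwA hwd using fun i => horb (n₁ + i) (by omega)
  set N : ℕ := n₂ - n₁ with hNdef
  have hN1 : 1 ≤ N := by omega
  set y : ℕ → X := fun i => if i = 0 then a else if i = N then b else w i with hydef
  have hkey : ∀ i ≤ N, dist (y i) (f^[n₁ + i] z) < η := by
    intro i hi
    by_cases h0 : i = 0
    · subst h0; simp only [hydef, if_pos rfl]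
      rw [dist_comm]; simpa using hn₁
    by_cases hN' : i = N
    · subst hN'; simp only [hydef, if_neg h0, if_pos rfl]
      rw [dist_comm]
      have : n₁ + N = n₂ := by omega
      rw [this]; exact hn₂
    · simp only [hydef, if_neg h0, if_neg hN']
      rw [dist_comm]; exact hwd i
  refine ⟨N, hN1, y, by simp [hydef], by simp only [hydef]; rw [if_neg (by omega : N ≠ 0)]; simp, ?_, ?_⟩
  · intro i hi
    by_cases h0 : i = 0
    · subst h0; simpa [hydef] using ha
    by_cases hN' : i = N
    · subst hN'; simp only [hydef, if_neg h0, if_pos rfl]; exact hb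
    · simp only [hydef, if_neg h0, if_neg hN']; exact hwA i
  · intro i hi
    have h1 : dist (f (y i)) (f (f^[n₁ + i] z)) < δ/3 := hmod _ _ (hkey i (le_of_lt hi))
    have h2 : dist (y (i+1)) (f^[n₁ + (i+1)] z) < η := hkey (i+1) hi
    have h3 : f (f^[n₁ + i] z) = f^[n₁ + (i+1)] z := by
      rw [show n₁ + (i+1) = (n₁ + i) + 1 from rfl, Function.iterate_succ_apply']
    calc dist (f (y i)) (y (i+1))
        ≤ dist (f (y i)) (f (f^[n₁ + i] z)) + dist (f (f^[n₁ + i] z)) (y (i+1)) :=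
          dist_triangle _ _ _
      _ < δ/3 + η := by
          rw [h3] at h1
          rw [h3, dist_comm (f^[n₁ + (i+1)] z)]
          linarith
      _ ≤ δ/3 + δ/3 := by linarith
      _ < δ := by linarith
end Aux

section D
variable {X : Type*} [MetricSpace X]

lemma exists_asymp_pseudo {f : X → X} {A : Set X}
    (hne : A.Nonempty) (hcl : IsClosed A) (hcs : IsCompact A) (hct : chainTransitive f A) :
    ∃ u : ℕ → X, (∀ n, u n ∈ A) ∧
      Tendsto (fun n => dist (f (u n)) (u (n+1))) atTop (nhds 0) ∧
      (∀ a ∈ A, ∀ ε > (0:ℝ), ∀ M : ℕ, ∃ n, M < n ∧ dist (u n) a < ε) := by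
  haveI : CompactSpace A := isCompact_iff_compactSpace.mp hcs
  haveI : Nonempty A := hne.to_subtype
  obtain ⟨c, hc⟩ := TopologicalSpace.exists_dense_seq A
  set q : ℕ → X := fun m => (c (Nat.unpair m).1 : X) with hqdef
  have hq : ∀ m, q m ∈ A := fun m => (c (Nat.unpair m).1).2
  have hdense : ∀ a ∈ A, ∀ ε > (0:ℝ), ∃ j, dist ((c j : X)) a < ε := by
    intro a ha ε hε
    obtain ⟨j, hj⟩ := hc.exists_dist_lt (⟨a, ha⟩ : A) hε
    exact ⟨j, by rw [dist_comm]; exact hj⟩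
  -- chains
  have hch : ∀ m : ℕ, ∃ N : ℕ, 1 ≤ N ∧ ∃ y : ℕ → X, y 0 = q m ∧ y N = q (m+1) ∧
      (∀ i ≤ N, y i ∈ A) ∧ ∀ i < N, dist (f (y i)) (y (i+1)) < 1/(m+1) :=
    fun m => hct (q m) (hq m) (q (m+1)) (hq (m+1)) (1/(m+1)) (by positivity)
  choose N hN1 y hy0 hyN hymem hyd using hch
  set S : ℕ → ℕ := fun m => ∑ j ∈ Finset.range m, N j with hSdef
  have hS0 : S 0 = 0 := by simp [hSdef]
  have hSsucc : ∀ m, S (m+1) = S m + N m := by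
    intro m; simp [hSdef, Finset.sum_range_succ]
  have hSmono : StrictMono S := strictMono_nat_of_lt_succ (by
    intro m; rw [hSsucc]; have := hN1 m; omega)
  have hSle : ∀ m, m ≤ S m := fun m => hSmono.le_apply
  classical
  set blk : ℕ → ℕ := fun n => Nat.findGreatest (fun m => S m ≤ n) n with hblkdef
  have hblk_le : ∀ n, S (blk n) ≤ n := by
    intro n
    have h0 : S 0 ≤ n := by rw [hS0]; exact Nat.zero_le n
    exact Nat.findGreatest_spec (P := fun m => S m ≤ n) (Nat.zero_le n) h0
  have hblk_lt : ∀ n, n < S (blk n + 1) := by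
    intro n
    by_contra h
    push_neg at h
    have h1 : blk n + 1 ≤ n := le_trans (hSle _) h
    have h2 : blk n + 1 ≤ blk n := Nat.le_findGreatest h1 h
    omega
  have hblk_S : ∀ m, blk (S m) = m := by
    intro m
    have h1 : m ≤ blk (S m) := Nat.le_findGreatest (hSle m) le_rfl
    have h2 : blk (S m) ≤ m := hSmono.le_iff_le.mp (hblk_le (S m))
    omega
  set u : ℕ → X := fun n => y (blk n) (n - S (blk n)) with hudef
  have hidx : ∀ n, n - S (blk n) ≤ N (blk n) := by
    intro n
    have h1 := hblk_le n
    have h2 := hblk_lt n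
    rw [hSsucc] at h2
    omega
  have humem : ∀ n, u n ∈ A := fun n => hymem _ _ (hidx n)
  have huS : ∀ m, u (S m) = q m := by
    intro m
    simp only [hudef, hblk_S m, Nat.sub_self]
    exact hy0 m
  have hustep : ∀ n, u (n+1) = y (blk n) (n - S (blk n) + 1) := by
    intro n
    rcases Nat.lt_or_ge (n+1) (S (blk n + 1)) with h | h
    · -- n + 1 < S (blk n + 1) : same block
      have hb1 : blk (n+1) = blk n := by
        have h1 : blk n ≤ blk (n+1) :=
          Nat.le_findGreatest (le_trans (Nat.findGreatest_le n) (Nat.le_succ n))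
            (le_trans (hblk_le n) (Nat.le_succ n))
        have h2 : blk (n+1) < blk n + 1 := by
          have := hblk_le (n+1)
          have hlt : S (blk (n+1)) < S (blk n + 1) := lt_of_le_of_lt this h
          exact hSmono.lt_iff_lt.mp hlt
        omega
      simp only [hudef, hb1]
      congr 1
      have := hblk_le n
      omega
    · -- n + 1 = S (blk n + 1) : next block, boundary point
      have h' : n + 1 = S (blk n + 1) := le_antisymm (hblk_lt n) h
      have hb : u (n+1) = q (blk n + 1) := by rw [h', huS]
      rw [hb, ← hyN (blk n)]
      congr 1
      have h1 := hblk_le n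
      have h2 : n + 1 = S (blk n) + N (blk n) := by rw [h', hSsucc]
      omega
  have hjump : ∀ n, dist (f (u n)) (u (n+1)) < 1/(blk n + 1) := by
    intro n
    rw [hustep n]
    apply hyd
    have h1 := hblk_le n
    have h2 := hblk_lt n
    rw [hSsucc] at h2
    omega
  have hblk_tendsto : Tendsto blk atTop atTop := by
    rw [tendsto_atTop_atTop]
    intro K
    refine ⟨S K, fun n hn => Nat.le_findGreatest (le_trans (hSle K) hn) hn⟩
  have htend : Tendsto (fun n => dist (f (u n)) (u (n+1))) atTop (nhds 0) := by
    apply squeeze_zero (fun n => dist_nonneg) (fun n => le_of_lt (hjump n))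
    exact tendsto_one_div_add_atTop_nhds_zero_nat.comp hblk_tendsto
  refine ⟨u, humem, htend, ?_⟩
  intro a ha ε hε M
  obtain ⟨j, hj⟩ := hdense a ha ε hε
  set m : ℕ := Nat.pair j (M+1) with hmdef
  have hm : M < m := lt_of_lt_of_le (Nat.lt_succ_self M) (Nat.right_le_pair j (M+1))
  refine ⟨S m, lt_of_lt_of_le hm (hSle m), ?_⟩
  rw [huS]
  simpa only [hqdef, hmdef, Nat.unpair_pair] using hj
end D

theorem stmt8 {X : Type*} [MetricSpace X] [CompactSpace X] (f : X → X)
    (hf : Continuous f)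
    (hls : ∀ u : ℕ → X,
      Filter.Tendsto (fun i => dist (f (u i)) (u (i + 1))) Filter.atTop (nhds 0) →
      ∃ z : X, Filter.Tendsto (fun i => dist (f^[i] z) (u i)) Filter.atTop (nhds 0)) :
    (∀ A : Set X, A.Nonempty → IsClosed A → chainTransitive f A →
      ∃ z : X, omegaPt f z = A) ∧
    {A : Set X | ∃ z : X, omegaPt f z = A} =
      {A : Set X | A.Nonempty ∧ IsClosed A ∧ chainTransitive f A} := by
  have key : ∀ A : Set X, A.Nonempty → IsClosed A → chainTransitive f A →
      ∃ z : X, omegaPt f z = A := by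
    intro A hne hcl hct
    obtain ⟨u, humem, hud, hvisit⟩ := exists_asymp_pseudo hne hcl hcl.isCompact hct
    obtain ⟨z, hz⟩ := hls u hud
    refine ⟨z, ?_⟩
    have h1 : omegaSeq (fun n => f^[n] z) ⊆ omegaSeq u := omegaSeq_subset_of_asymp hz
    have h2 : omegaSeq u ⊆ omegaSeq (fun n => f^[n] z) :=
      omegaSeq_subset_of_asymp (hz.congr fun n => dist_comm _ _)
    have h3 : omegaSeq u = A := by
      apply subset_antisymm
      · intro x hx
        have hx0 : x ∈ closure (u '' Set.Ioi 0) := Set.mem_iInter.mp hx 0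
        have hsub : closure (u '' Set.Ioi 0) ⊆ A := by
          rw [← hcl.closure_eq]
          exact closure_mono (by rintro _ ⟨n, -, rfl⟩; exact humem n)
        exact hsub hx0
      · intro a ha
        rw [mem_omegaSeq_iff]
        exact fun ε hε M => hvisit a ha ε hε M
    show omegaSeq (fun n => f^[n] z) = A
    rw [← h3]
    exact subset_antisymm h1 h2
  refine ⟨key, ?_⟩
  ext A
  simp only [Set.mem_setOf_eq]
  constructor
  · rintro ⟨z, rfl⟩
    exact ⟨omegaSeq_nonempty _, omegaSeq_closed _, chainTransitive_omegaPt hf z⟩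
  · rintro ⟨h1, h2, h3⟩
    exact key A h1 h2 h3
end

section
/- Let (X,d) be a compact metric space and f: X → X continuous. If (X,f) has two-sided orbital limit shadowing, then it satisfies property P_e: for every nonempty closed internally chain transitive set A there exists a full trajectory ⟨x_i⟩_{i∈ℤ} with α(⟨x_i⟩) = ω(⟨x_i⟩) = A. -/
open Filter Metric Topology Set

set_option linter.unusedSectionVars false
namespace OLS

def pS (N : ℕ → ℕ) : ℕ → ℕ
  | 0 => 0
  | n+1 => pS N n + N n

def pIdx (N : ℕ → ℕ) (m : ℕ) : ℕ := Nat.findGreatest (fun n => pS N n ≤ m) m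

variable {N : ℕ → ℕ} (hN : ∀ n, 1 ≤ N n)
include hN

theorem pS_strictMono : StrictMono (pS N) := by
  apply strictMono_nat_of_lt_succ
  intro n
  have := hN n
  simp [pS]; omega

theorem self_le_pS (n : ℕ) : n ≤ pS N n := by
  simpa using (pS_strictMono hN).le_apply

omit hN in
theorem pS_le_pIdx (m : ℕ) : pS N (pIdx N m) ≤ m :=
  Nat.findGreatest_spec (P := fun n => pS N n ≤ m) (Nat.zero_le m) (show pS N 0 ≤ m from Nat.zero_le m)

theorem lt_pS_pIdx_succ (m : ℕ) : m < pS N (pIdx N m + 1) := by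
  by_contra h
  push_neg at h
  have h1 : pIdx N m + 1 ≤ m := le_trans (self_le_pS hN _) h
  exact Nat.findGreatest_is_greatest (Nat.lt_succ_self _) h1 h

theorem le_pIdx {n m : ℕ} (h : pS N n ≤ m) : n ≤ pIdx N m := by
  by_contra hc
  push_neg at hc
  have : pS N (pIdx N m + 1) ≤ pS N n := (pS_strictMono hN).monotone hc
  have := lt_pS_pIdx_succ hN m
  omega

theorem pIdx_eq {n m : ℕ} (h1 : pS N n ≤ m) (h2 : m < pS N (n+1)) : pIdx N m = n := by
  have hle := le_pIdx hN h1
  by_contra hc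
  have : n + 1 ≤ pIdx N m := by omega
  have : pS N (n+1) ≤ pS N (pIdx N m) := (pS_strictMono hN).monotone this
  have := pS_le_pIdx (N := N) m
  omega

theorem pIdx_pS (n : ℕ) : pIdx N (pS N n) = n :=
  pIdx_eq hN le_rfl (pS_strictMono hN (Nat.lt_succ_self n))

theorem pIdx_tendsto : Tendsto (pIdx N) atTop atTop := by
  apply tendsto_atTop_atTop.2
  intro n
  exact ⟨pS N n, fun m hm => le_pIdx hN hm⟩

/-- Glued sequence from blocks `y n : [0, N n] → X`. -/
def glue (N : ℕ → ℕ) {X : Type*} (y : ℕ → ℕ → X) (m : ℕ) : X :=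
  y (pIdx N m) (m - pS N (pIdx N m))

variable {X : Type*} {y : ℕ → ℕ → X} (hy : ∀ n, y n (N n) = y (n+1) 0)
include hy

omit hy in
theorem glue_pS (n : ℕ) : glue N y (pS N n) = y n 0 := by
  simp [glue, pIdx_pS hN]

omit hy in
theorem glue_sub_lt (m : ℕ) : m - pS N (pIdx N m) < N (pIdx N m) := by
  have h1 := pS_le_pIdx (N := N) m
  have h2 := lt_pS_pIdx_succ hN m
  simp [pS] at h2
  omega

theorem glue_succ (m : ℕ) :
    glue N y (m+1) = y (pIdx N m) (m - pS N (pIdx N m) + 1) := by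
  have h1 := pS_le_pIdx (N := N) m
  have h2 := lt_pS_pIdx_succ hN m
  rcases lt_or_eq_of_le (Nat.succ_le_of_lt h2) with h | h
  · have : pIdx N (m+1) = pIdx N m := pIdx_eq hN (by omega) h
    simp [glue, this]
    congr 1
    omega
  · -- m + 1 = pS N (pIdx N m + 1)
    have h3 : pIdx N (m+1) = pIdx N m + 1 := by
      apply pIdx_eq hN (le_of_eq h.symm)
      rw [h]
      exact pS_strictMono hN (Nat.lt_succ_self _)
    have h4 : m - pS N (pIdx N m) + 1 = N (pIdx N m) := by
      have : pS N (pIdx N m + 1) = pS N (pIdx N m) + N (pIdx N m) := rfl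
      omega
    rw [h4, hy, glue, h3]
    congr 1
    omega

end OLS

set_option maxHeartbeats 1000000 in
open OLS in
theorem stmt12 {X : Type*} [MetricSpace X] [CompactSpace X] (f : X → X)
    (hf : Continuous f)
    (hols : ∀ u : ℤ → X, twoSidedAsymptotic f u →
      ∃ z : ℤ → X, fullTraj f z ∧ alphaZ z = alphaZ u ∧ omegaZ z = omegaZ u) :
    ∀ A : Set X, A.Nonempty → IsClosed A → chainTransitive f A →
      ∃ u : ℤ → X, fullTraj f u ∧ alphaZ u = A ∧ omegaZ u = A := by
  intro A hAne hAcl hCT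
  -- dense sequence in A
  have hAcomp : IsCompact A := hAcl.isCompact
  obtain ⟨t, htA, htc, htd⟩ := hAcomp.isSeparable.exists_countable_dense_subset
  have htne : t.Nonempty := by
    rcases hAne with ⟨a, ha⟩
    rw [Set.nonempty_iff_ne_empty]
    intro h
    rw [h] at htd
    simpa using htd ha
  obtain ⟨c, hc⟩ := htc.exists_eq_range htne
  have hcA : ∀ k, c k ∈ A := fun k => htA (hc ▸ Set.mem_range_self k)
  have hAd : A ⊆ closure (Set.range c) := hc ▸ htd
  set b : ℕ → X := fun n => c n.unpair.1 with hb_def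
  have hbA : ∀ n, b n ∈ A := fun n => hcA _
  -- forward chains
  have hfor : ∀ n : ℕ, ∃ Nn : ℕ, 1 ≤ Nn ∧ ∃ y : ℕ → X,
      y 0 = b n ∧ y Nn = b (n+1) ∧ (∀ i ≤ Nn, y i ∈ A) ∧
      ∀ i < Nn, dist (f (y i)) (y (i+1)) < 1/((n:ℝ)+1) :=
    fun n => hCT (b n) (hbA n) (b (n+1)) (hbA (n+1)) (1/((n:ℝ)+1)) (by positivity)
  choose N hN1 y hy0 hyN hyA hyd using hfor
  -- backward chains
  have hback : ∀ n : ℕ, ∃ Kn : ℕ, 1 ≤ Kn ∧ ∃ z : ℕ → X,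
      z 0 = b (n+1) ∧ z Kn = b n ∧ (∀ i ≤ Kn, z i ∈ A) ∧
      ∀ i < Kn, dist (f (z i)) (z (i+1)) < 1/((n:ℝ)+1) :=
    fun n => hCT (b (n+1)) (hbA (n+1)) (b n) (hbA n) (1/((n:ℝ)+1)) (by positivity)
  choose K hK1 z hz0 hzK hzA hzd using hback
  set w : ℕ → X := glue N y with hw_def
  set g : ℕ → ℕ → X := fun n j => z n (K n - j) with hg_def
  set v : ℕ → X := glue K g with hv_def
  have hycompat : ∀ n, y n (N n) = y (n+1) 0 := fun n => by rw [hyN, hy0]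
  have hgcompat : ∀ n, g n (K n) = g (n+1) 0 := fun n => by
    show z n (K n - K n) = z (n+1) (K (n+1) - 0)
    rw [Nat.sub_self, Nat.sub_zero, hz0, hzK]
  have hw_succ : ∀ m, w (m+1) = y (pIdx N m) (m - pS N (pIdx N m) + 1) :=
    glue_succ hN1 hycompat
  have hv_succ : ∀ m, v (m+1) = g (pIdx K m) (m - pS K (pIdx K m) + 1) :=
    glue_succ hK1 hgcompat
  have hw_lt : ∀ m, m - pS N (pIdx N m) < N (pIdx N m) := glue_sub_lt hN1
  have hv_lt : ∀ m, m - pS K (pIdx K m) < K (pIdx K m) := glue_sub_lt hK1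
  have hw_pS : ∀ n, w (pS N n) = b n := fun n => (glue_pS hN1 n).trans (hy0 n)
  have hv_pS : ∀ n, v (pS K n) = b n := fun n => by
    rw [hv_def, glue_pS hK1]
    show z n (K n - 0) = b n
    rw [Nat.sub_zero]
    exact hzK n
  have hwA : ∀ m, w m ∈ A := fun m => hyA _ _ (hw_lt m).le
  have hvA : ∀ m, v m ∈ A := fun m => hzA _ _ (Nat.sub_le _ _)
  -- error bounds
  have hEw : ∀ m, dist (f (w m)) (w (m+1)) ≤ 1/((pIdx N m : ℝ)+1) := fun m => by
    rw [hw_succ]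
    exact (hyd _ _ (hw_lt m)).le
  have hEv : ∀ m, dist (f (v (m+1))) (v m) ≤ 1/((pIdx K m : ℝ)+1) := fun m => by
    have hj := hv_lt m
    rw [hv_succ]
    have hvm : v m = z (pIdx K m) (K (pIdx K m) - (m - pS K (pIdx K m))) := rfl
    rw [hvm]
    show dist (f (z _ (K _ - (m - pS K (pIdx K m) + 1)))) _ ≤ _
    have hk : K (pIdx K m) - (m - pS K (pIdx K m) + 1) < K (pIdx K m) := by omega
    have hd := (hzd _ _ hk).le
    have he : K (pIdx K m) - (m - pS K (pIdx K m) + 1) + 1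
        = K (pIdx K m) - (m - pS K (pIdx K m)) := by omega
    rw [he] at hd
    exact hd
  clear_value w g v
  -- the two-sided pseudo-orbit
  set u : ℤ → X := fun i => if 0 ≤ i then w i.toNat else v (-i).toNat with hu_def
  have hu_pos : ∀ i : ℤ, 0 ≤ i → u i = w i.toNat := fun i hi => if_pos hi
  have hu_neg : ∀ i : ℤ, i < 0 → u i = v (-i).toNat := fun i hi => if_neg (by omega)
  clear_value u
  have hw0v0 : w 0 = v 0 := by
    have h1 : w 0 = b 0 := hw_pS 0
    have h2 : v 0 = b 0 := hv_pS 0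
    rw [h1, h2]
  have huA : ∀ i, u i ∈ A := by
    intro i
    by_cases hi : 0 ≤ i
    · rw [hu_pos i hi]; exact hwA _
    · rw [hu_neg i (by omega)]; exact hvA _
  -- asymptotics
  have hbound : ∀ (L : ℕ → ℕ) (hL : ∀ n, 1 ≤ L n),
      Tendsto (fun m : ℕ => 1/((pIdx L m : ℝ)+1)) atTop (nhds 0) := by
    intro L hL
    have h1 : Tendsto (fun n : ℕ => 1/((n:ℝ)+1)) atTop (nhds 0) :=
      tendsto_one_div_add_atTop_nhds_zero_nat
    exact h1.comp (pIdx_tendsto hL)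
  have hEwt : Tendsto (fun m : ℕ => dist (f (w m)) (w (m+1))) atTop (nhds 0) :=
    squeeze_zero (fun _ => dist_nonneg) hEw (hbound N hN1)
  have hEvt : Tendsto (fun m : ℕ => dist (f (v (m+1))) (v m)) atTop (nhds 0) :=
    squeeze_zero (fun _ => dist_nonneg) hEv (hbound K hK1)
  have htoNat : Tendsto Int.toNat atTop atTop := by
    refine tendsto_atTop.2 fun bb => ?_
    filter_upwards [eventually_ge_atTop ((bb:ℤ))] with i hi
    omega
  have hmap : Tendsto (fun i : ℤ => (-i-1).toNat) atBot atTop := by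
    have h1 : Tendsto (fun i : ℤ => -i + (-1)) atBot atTop :=
      tendsto_atTop_add_const_right atBot (-1) tendsto_neg_atBot_atTop
    exact htoNat.comp h1
  have hasym : twoSidedAsymptotic f u := by
    constructor
    · refine (hEwt.comp htoNat).congr' ?_
      filter_upwards [eventually_ge_atTop (0:ℤ)] with i hi
      have h1 : u i = w i.toNat := hu_pos i hi
      have h2 : u (i+1) = w (i.toNat + 1) := by
        rw [hu_pos (i+1) (by omega)]
        congr 1
        omega
      simp only [Function.comp]
      rw [h1, h2]
    · refine (hEvt.comp hmap).congr' ?_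
      filter_upwards [eventually_le_atBot (-1:ℤ)] with i hi
      have h1 : u i = v ((-i-1).toNat + 1) := by
        rw [hu_neg i (by omega)]
        congr 1
        omega
      have h2 : u (i+1) = v ((-i-1).toNat) := by
        rcases lt_or_eq_of_le hi with h | h
        · rw [hu_neg (i+1) (by omega)]
          congr 1
          omega
        · have hi1 : i = -1 := h
          subst hi1
          show u 0 = _
          rw [hu_pos 0 le_rfl]
          show w (Int.toNat 0) = v ((1:ℤ)-1).toNat
          norm_num
          exact hw0v0
      simp only [Function.comp]
      rw [h1, h2]
  -- limit sets
  have homega : omegaZ u = A := by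
    apply Set.Subset.antisymm
    · intro x hx
      simp only [omegaZ, Set.mem_iInter] at hx
      have hsub : u '' {n : ℤ | ((0:ℕ):ℤ) < n} ⊆ A := by
        rintro _ ⟨i, _, rfl⟩; exact huA i
      exact closure_minimal hsub hAcl (hx 0)
    · have hck : ∀ k, c k ∈ omegaZ u := by
        intro k
        simp only [omegaZ, Set.mem_iInter]
        intro Mn
        apply subset_closure
        set p := Nat.pair k (Mn+1) with hp_def
        have hp1 : Mn + 1 ≤ p := Nat.right_le_pair _ _
        have hp2 : p ≤ pS N p := self_le_pS hN1 p
        refine ⟨((pS N p : ℕ) : ℤ), ?_, ?_⟩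
        · show (Mn:ℤ) < _
          omega
        · rw [hu_pos _ (by omega)]
          have ht : ((pS N p : ℕ) : ℤ).toNat = pS N p := by omega
          rw [ht, hw_pS]
          show c p.unpair.1 = c k
          rw [hp_def, Nat.unpair_pair]
      intro a ha
      have h3 : IsClosed (omegaZ u) := isClosed_iInter fun _ => isClosed_closure
      have h2 : Set.range c ⊆ omegaZ u := by rintro _ ⟨k, rfl⟩; exact hck k
      exact closure_minimal h2 h3 (hAd ha)
  have halpha : alphaZ u = A := by
    apply Set.Subset.antisymm
    · intro x hx
      simp only [alphaZ, Set.mem_iInter] at hx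
      have hsub : u '' {n : ℤ | n < -((0:ℕ):ℤ)} ⊆ A := by
        rintro _ ⟨i, _, rfl⟩; exact huA i
      exact closure_minimal hsub hAcl (hx 0)
    · have hck : ∀ k, c k ∈ alphaZ u := by
        intro k
        simp only [alphaZ, Set.mem_iInter]
        intro Mn
        apply subset_closure
        set p := Nat.pair k (Mn+1) with hp_def
        have hp1 : Mn + 1 ≤ p := Nat.right_le_pair _ _
        have hp2 : p ≤ pS K p := self_le_pS hK1 p
        refine ⟨-((pS K p : ℕ) : ℤ), ?_, ?_⟩
        · show _ < -(Mn:ℤ)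
          omega
        · rw [hu_neg _ (by omega)]
          have ht : (-(-((pS K p : ℕ) : ℤ))).toNat = pS K p := by omega
          rw [ht, hv_pS]
          show c p.unpair.1 = c k
          rw [hp_def, Nat.unpair_pair]
      intro a ha
      have h3 : IsClosed (alphaZ u) := isClosed_iInter fun _ => isClosed_closure
      have h2 : Set.range c ⊆ alphaZ u := by rintro _ ⟨k, rfl⟩; exact hck k
      exact closure_minimal h2 h3 (hAd ha)
  obtain ⟨zz, hzz, hza, hzo⟩ := hols u hasym
  exact ⟨zz, hzz, by rw [hza, halpha], by rw [hzo, homega]⟩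
end

section
/- Let (X,d) be a compact metric space and f: X → X continuous with γ-restricted two-sided orbital limit shadowing. Then every nonempty closed internally chain transitive set A is a γ-limit set: there exists x ∈ X with γ(x) = A. Hence ICT_f ⊆ γ_f. -/
open Filter Metric Topology Set

lemma tail_dense {X : Type*} [MetricSpace X] [CompactSpace X] (A : Set X)
    (hA : A.Nonempty) (hAc : IsClosed A) :
    ∃ a : ℕ → X, (∀ n, a n ∈ A) ∧
      ∀ y ∈ A, ∀ ε > (0:ℝ), ∀ M : ℕ, ∃ n, M ≤ n ∧ dist (a n) y < ε := by
  have : Nonempty A := hA.to_subtype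
  have : CompactSpace A := isCompact_iff_compactSpace.mp hAc.isCompact
  obtain ⟨b, hb⟩ := TopologicalSpace.exists_dense_seq A
  refine ⟨fun n => (b n.unpair.1 : X), fun n => (b n.unpair.1).2, ?_⟩
  intro y hy ε hε M
  obtain ⟨j, hj⟩ := hb.exists_dist_lt (⟨y, hy⟩ : A) hε
  refine ⟨Nat.pair j M, Nat.right_le_pair j M, ?_⟩
  simp only [Nat.unpair_pair]
  rw [Subtype.dist_eq] at hj
  simpa [dist_comm] using hj

lemma exists_pseudo {X : Type*} [MetricSpace X] [CompactSpace X] (f : X → X)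
    (A : Set X) (hA : A.Nonempty) (hAc : IsClosed A) (hct : chainTransitive f A) :
    ∃ u : ℤ → X, twoSidedAsymptotic f u ∧ alphaZ u = A ∧ omegaZ u = A := by
  classical
  obtain ⟨a, haA, hdense⟩ := tail_dense A hA hAc
  have hδ : ∀ k : ℕ, (0:ℝ) < 1/(k+1) := fun k => by positivity
  choose N hN1 y hy0 hyN hyA hyd using
    fun k : ℕ => hct (a k) (haA k) (a (k+1)) (haA (k+1)) (1/(k+1)) (hδ k)
  choose M hM1 w hw0 hwM hwA hwd using
    fun k : ℕ => hct (a (k+1)) (haA (k+1)) (a k) (haA k) (1/(k+1)) (hδ k)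
  set S : ℕ → ℕ := fun k => ∑ j ∈ Finset.range k, N j with hSdef
  set T : ℕ → ℕ := fun k => ∑ j ∈ Finset.range k, M j with hTdef
  have hS0 : S 0 = 0 := by simp [hSdef]
  have hT0 : T 0 = 0 := by simp [hTdef]
  have hSsucc : ∀ k, S (k+1) = S k + N k := fun k => Finset.sum_range_succ _ _
  have hTsucc : ∀ k, T (k+1) = T k + M k := fun k => Finset.sum_range_succ _ _
  have hSmono : ∀ k, S k < S (k+1) := fun k => by have := hN1 k; rw [hSsucc]; omega
  have hTmono : ∀ k, T k < T (k+1) := fun k => by have := hM1 k; rw [hTsucc]; omega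
  have hSmono' : StrictMono S := strictMono_nat_of_lt_succ hSmono
  have hTmono' : StrictMono T := strictMono_nat_of_lt_succ hTmono
  have hSge : ∀ k, k ≤ S k := by
    intro k; induction k with
    | zero => omega
    | succ k ih => have := hSmono k; omega
  have hTge : ∀ k, k ≤ T k := by
    intro k; induction k with
    | zero => omega
    | succ k ih => have := hTmono k; omega
  -- block index functions
  have hPex : ∀ n : ℕ, ∃ k, S k ≤ n ∧ n < S (k+1) := by
    intro n; induction n with
    | zero => exact ⟨0, by omega, by have := hSmono 0; omega⟩
    | succ n ih =>
        obtain ⟨k, h1, h2⟩ := ih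
        rcases Nat.lt_or_ge (n+1) (S (k+1)) with h | h
        · exact ⟨k, by omega, h⟩
        · exact ⟨k+1, h, by have := hSmono (k+1); omega⟩
  have hQex : ∀ n : ℕ, ∃ k, T k ≤ n ∧ n < T (k+1) := by
    intro n; induction n with
    | zero => exact ⟨0, by omega, by have := hTmono 0; omega⟩
    | succ n ih =>
        obtain ⟨k, h1, h2⟩ := ih
        rcases Nat.lt_or_ge (n+1) (T (k+1)) with h | h
        · exact ⟨k, by omega, h⟩
        · exact ⟨k+1, h, by have := hTmono (k+1); omega⟩
  choose P hPle hPlt using hPex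
  choose Q hQle hQlt using hQex
  have hPuniq : ∀ n k, S k ≤ n → n < S (k+1) → P n = k := by
    intro n k h1 h2
    by_contra hne
    rcases lt_or_gt_of_ne hne with h | h
    · have := hSmono'.monotone (show P n + 1 ≤ k by omega)
      have := hPlt n; omega
    · have := hSmono'.monotone (show k + 1 ≤ P n by omega)
      have := hPle n; omega
  have hQuniq : ∀ n k, T k ≤ n → n < T (k+1) → Q n = k := by
    intro n k h1 h2
    by_contra hne
    rcases lt_or_gt_of_ne hne with h | h
    · have := hTmono'.monotone (show Q n + 1 ≤ k by omega)
      have := hQlt n; omega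
    · have := hTmono'.monotone (show k + 1 ≤ Q n by omega)
      have := hQle n; omega
  -- the pseudo-orbit
  set u : ℤ → X := fun i =>
    if 0 ≤ i then y (P i.toNat) (i.toNat - S (P i.toNat))
    else w (Q ((-i).toNat - 1)) (T (Q ((-i).toNat - 1) + 1) - (-i).toNat) with hu
  have huF : ∀ n : ℕ, u (n:ℤ) = y (P n) (n - S (P n)) := by
    intro n
    simp only [hu, Int.toNat_natCast]
    rw [if_pos (Int.natCast_nonneg n)]
  have huB : ∀ n : ℕ, 1 ≤ n → u (-(n:ℤ)) = w (Q (n-1)) (T (Q (n-1) + 1) - n) := by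
    intro n hn
    simp only [hu, neg_neg, Int.toNat_natCast]
    rw [if_neg (by omega)]
  have huStart : ∀ m : ℕ, u ((S m : ℕ):ℤ) = a m := by
    intro m
    rw [huF (S m), hPuniq (S m) m le_rfl (hSmono m), Nat.sub_self, hy0]
  have huStartB : ∀ m : ℕ, 1 ≤ m → u (-(T m : ℤ)) = a m := by
    intro m hm
    have hTm : 1 ≤ T m := le_trans hm (hTge m)
    rw [huB (T m) hTm]
    have hT' : T (m-1) < T m := by
      have h3 : m - 1 + 1 = m := by omega
      have := hTmono (m-1); rwa [h3] at this
    have hq : Q (T m - 1) = m - 1 := by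
      apply hQuniq
      · omega
      · have h3 : m - 1 + 1 = m := by omega
        rw [h3]; omega
    rw [hq]
    have h3 : m - 1 + 1 = m := by omega
    rw [h3, Nat.sub_self, hw0, h3]
  have huFstep : ∀ n : ℕ, u ((n:ℤ)+1) = y (P n) (n - S (P n) + 1) := by
    intro n
    have h1 : ((n:ℤ)+1) = ((n+1 : ℕ) : ℤ) := by push_cast; ring
    rw [h1, huF (n+1)]
    rcases Nat.lt_or_ge (n+1) (S (P n + 1)) with h | h
    · rw [hPuniq (n+1) (P n) (le_trans (hPle n) (Nat.le_succ n)) h]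
      congr 1
      have := hPle n; omega
    · have heq : n + 1 = S (P n + 1) := le_antisymm (hPlt n) h
      rw [hPuniq (n+1) (P n + 1) (by omega) (by have := hSmono (P n + 1); omega)]
      have e1 : n + 1 - S (P n + 1) = 0 := by omega
      rw [e1, hy0, ← hyN (P n)]
      congr 1
      have := hSsucc (P n); have := hPle n; omega
  have hjumpF : ∀ n : ℕ, dist (f (u (n:ℤ))) (u ((n:ℤ)+1)) < 1/(P n + 1) := by
    intro n
    rw [huF n, huFstep n]
    exact hyd (P n) _ (by have := hPlt n; have := hSsucc (P n); have := hPle n; omega)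
  have huBstep : ∀ n : ℕ, 1 ≤ n →
      u (-(n:ℤ)+1) = w (Q (n-1)) (T (Q (n-1)+1) - n + 1) := by
    intro n hn
    have h1 : T (Q (n-1)) ≤ n - 1 := hQle (n-1)
    have h2 : n - 1 < T (Q (n-1)+1) := hQlt (n-1)
    rcases Nat.lt_or_ge 1 n with h | h
    · -- n ≥ 2
      have e : -(n:ℤ)+1 = -((n-1 : ℕ):ℤ) := by omega
      rw [e, huB (n-1) (by omega)]
      rcases Nat.lt_or_ge (T (Q (n-1))) (n-1) with hb | hb
      · have hq : Q (n-1-1) = Q (n-1) := hQuniq _ _ (by omega) (by omega)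
        rw [hq]
        congr 1
        omega
      · have hTk : T (Q (n-1)) = n - 1 := le_antisymm h1 (by omega)
        have hk1 : 1 ≤ Q (n-1) := by
          by_contra hc
          have hq0 : Q (n-1) = 0 := by omega
          rw [hq0, hT0] at hTk; omega
        have hT' : T (Q (n-1) - 1) < T (Q (n-1)) := by
          have h3 : Q (n-1) - 1 + 1 = Q (n-1) := by omega
          have := hTmono (Q (n-1) - 1); rwa [h3] at this
        have hTk1 : T (Q (n-1) - 1 + 1) = T (Q (n-1)) := by
          congr 1; omega
        have hq : Q (n-1-1) = Q (n-1) - 1 := by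
          apply hQuniq
          · omega
          · rw [hTk1]; omega
        rw [hq, hTk1]
        have e0 : T (Q (n-1)) - (n-1) = 0 := by omega
        rw [e0, hw0]
        have e1 : T (Q (n-1) + 1) - n + 1 = M (Q (n-1)) := by
          have := hTsucc (Q (n-1)); have := hM1 (Q (n-1)); omega
        rw [e1, hwM]
        congr 1
        omega
    · -- n = 1
      have hn1 : n = 1 := by omega
      subst hn1
      simp only [Nat.cast_one]
      have h00 : u (-(1:ℤ)+1) = a 0 := by
        have e : -(1:ℤ)+1 = ((S 0 : ℕ):ℤ) := by rw [hS0]; norm_num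
        rw [e, huStart 0]
      rw [h00]
      have hq : Q 0 = 0 := hQuniq 0 0 hT0.le (by have := hTmono 0; omega)
      simp only [Nat.sub_self] at *
      rw [hq]
      have e1 : T (0 + 1) - 1 + 1 = M 0 := by
        have := hTsucc 0; have := hM1 0; omega
      rw [e1, hwM]
  have hjumpB : ∀ n : ℕ, 1 ≤ n →
      dist (f (u (-(n:ℤ)))) (u (-(n:ℤ)+1)) < 1/(Q (n-1) + 1) := by
    intro n hn
    rw [huB n hn, huBstep n hn]
    apply hwd
    have h1 := hQle (n-1); have h2 := hQlt (n-1)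
    have := hTsucc (Q (n-1)); have := hM1 (Q (n-1))
    omega
  have hrange : ∀ i : ℤ, u i ∈ A := by
    intro i
    rcases le_or_gt 0 i with h | h
    · have e : i = ((i.toNat:ℕ):ℤ) := by omega
      rw [e, huF]
      exact hyA _ _ (by have := hPlt i.toNat; have := hSsucc (P i.toNat); omega)
    · have hn : 1 ≤ (-i).toNat := by omega
      have e : i = -(((-i).toNat:ℕ):ℤ) := by omega
      rw [e, huB _ hn]
      exact hwA _ _ (by have := hQle ((-i).toNat - 1); have := hQlt ((-i).toNat - 1); have := hTsucc (Q ((-i).toNat - 1)); omega)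
  refine ⟨u, ⟨?_, ?_⟩, ?_, ?_⟩
  · -- atTop
    rw [Metric.tendsto_nhds]
    intro ε hε
    obtain ⟨k0, hk0⟩ := exists_nat_one_div_lt hε
    rw [eventually_atTop]
    refine ⟨(S k0 : ℤ), fun i hi => ?_⟩
    have h0 : (0:ℤ) ≤ i := by omega
    have e : i = ((i.toNat:ℕ):ℤ) := by omega
    have hle : S k0 ≤ i.toNat := by omega
    have hk : k0 < P i.toNat + 1 :=
      hSmono'.lt_iff_lt.mp (lt_of_le_of_lt hle (hPlt i.toNat))
    have hb := hjumpF i.toNat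
    rw [← e] at hb
    rw [Real.dist_eq, sub_zero, abs_of_nonneg dist_nonneg]
    refine lt_of_lt_of_le (lt_of_lt_of_le hb ?_) hk0.le
    apply one_div_le_one_div_of_le
    · positivity
    · exact_mod_cast by omega
  · -- atBot
    rw [Metric.tendsto_nhds]
    intro ε hε
    obtain ⟨k0, hk0⟩ := exists_nat_one_div_lt hε
    rw [eventually_atBot]
    refine ⟨-(T k0 : ℤ) - 1, fun i hi => ?_⟩
    have h0 : i < 0 := by omega
    set n := (-i).toNat with hn
    have hn1 : 1 ≤ n := by omega
    have hle : T k0 + 1 ≤ n := by omega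
    have hk : k0 < Q (n-1) + 1 :=
      hTmono'.lt_iff_lt.mp (lt_of_le_of_lt (show T k0 ≤ n - 1 by omega) (hQlt (n-1)))
    have e : i = -((n:ℕ):ℤ) := by omega
    have hb := hjumpB n hn1
    rw [← e] at hb
    rw [Real.dist_eq, sub_zero, abs_of_nonneg dist_nonneg]
    refine lt_of_lt_of_le (lt_of_lt_of_le hb ?_) hk0.le
    apply one_div_le_one_div_of_le
    · positivity
    · exact_mod_cast by omega
  · -- alphaZ u = A
    apply le_antisymm
    · intro x hx
      simp only [alphaZ, mem_iInter] at hx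
      have hsub : closure (u '' {n : ℤ | n < -((0:ℕ):ℤ)}) ⊆ A := by
        apply closure_minimal ?_ hAc
        rintro _ ⟨n, _, rfl⟩; exact hrange n
      exact hsub (hx 0)
    · intro x hxA
      simp only [alphaZ, mem_iInter]
      intro M0
      rw [Metric.mem_closure_iff]
      intro ε hε
      obtain ⟨m, hm1, hm2⟩ := hdense x hxA ε hε (M0+1)
      refine ⟨u (-(T m : ℤ)), ⟨-(T m:ℤ), ?_, rfl⟩, ?_⟩
      · simp only [mem_setOf_eq]; have := hTge m; omega
      · rw [huStartB m (by omega), dist_comm]; exact hm2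
  · -- omegaZ u = A
    apply le_antisymm
    · intro x hx
      simp only [omegaZ, mem_iInter] at hx
      have hsub : closure (u '' {n : ℤ | ((0:ℕ):ℤ) < n}) ⊆ A := by
        apply closure_minimal ?_ hAc
        rintro _ ⟨n, _, rfl⟩; exact hrange n
      exact hsub (hx 0)
    · intro x hxA
      simp only [omegaZ, mem_iInter]
      intro M0
      rw [Metric.mem_closure_iff]
      intro ε hε
      obtain ⟨m, hm1, hm2⟩ := hdense x hxA ε hε (M0+1)
      refine ⟨u ((S m : ℕ):ℤ), ⟨(S m:ℤ), ?_, rfl⟩, ?_⟩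
      · simp only [mem_setOf_eq]; have := hSge m; omega
      · rw [huStart m, dist_comm]; exact hm2

lemma fullTraj_iter {X : Type*} {f : X → X} {z : ℤ → X} (hz : fullTraj f z) :
    ∀ (n : ℕ) (m : ℤ), f^[n] (z m) = z (m + n) := by
  intro n
  induction n with
  | zero => intro m; simp
  | succ n ih =>
    intro m
    rw [Function.iterate_succ_apply, hz m, ih (m+1)]
    congr 1; push_cast; ring

lemma omegaPt_traj {X : Type*} [MetricSpace X] {f : X → X} {z : ℤ → X} (hz : fullTraj f z) :
    omegaPt f (z 0) = omegaZ z := by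
  unfold omegaPt omegaSeq omegaZ
  apply iInter_congr
  intro M
  have himg : (fun n : ℕ => f^[n] (z 0)) '' Set.Ioi M = z '' {n : ℤ | (M:ℤ) < n} := by
    ext x
    constructor
    · rintro ⟨n, hn, rfl⟩
      refine ⟨(n:ℤ), ?_, ?_⟩
      · simp only [mem_setOf_eq]; exact_mod_cast hn
      · show z _ = f^[n] (z 0)
        rw [fullTraj_iter hz n 0]; congr 1; omega
    · rintro ⟨n, hn, rfl⟩
      simp only [mem_setOf_eq] at hn
      refine ⟨n.toNat, ?_, ?_⟩
      · simp only [Set.mem_Ioi]; omega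
      · show f^[n.toNat] (z 0) = z n
        rw [fullTraj_iter hz n.toNat 0]; congr 1; omega
  rw [himg]

lemma gamma_of_traj {X : Type*} [MetricSpace X] {f : X → X} {z : ℤ → X} {A : Set X}
    (hz : fullTraj f z) (hα : alphaZ z = A) (hω : omegaZ z = A) :
    gammaLimit f (z 0) = A := by
  apply le_antisymm
  · intro x hx
    have h1 : x ∈ omegaPt f (z 0) := hx.1
    rw [omegaPt_traj hz, hω] at h1
    exact h1
  · intro x hxA
    have hαx : x ∈ alphaZ z := by rw [hα]; exact hxA
    simp only [alphaZ, mem_iInter] at hαx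
    have key : ∀ m : ℕ, ∃ n : ℤ, n < -(m:ℤ) ∧ dist x (z n) < 1/(m+1) := by
      intro m
      have := hαx m
      rw [Metric.mem_closure_iff] at this
      obtain ⟨b, ⟨n, hn, rfl⟩, hd⟩ := this (1/(m+1)) (by positivity)
      exact ⟨n, hn, hd⟩
    choose c hc1 hc2 using key
    -- define ns recursively
    set ns : ℕ → ℕ := fun i => Nat.rec (-(c 0)).toNat
      (fun i prev => (-(c (prev + i + 1))).toNat) i with hns
    have hns0 : ns 0 = (-(c 0)).toNat := rfl
    have hnssucc : ∀ i, ns (i+1) = (-(c (ns i + i + 1))).toNat := fun i => rfl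
    have hcpos : ∀ m : ℕ, (m:ℤ) < (-(c m)) := by intro m; have := hc1 m; omega
    have hgrow : ∀ i, ns i + i + 1 < ns (i+1) := by
      intro i
      have := hcpos (ns i + i + 1)
      rw [hnssucc]
      omega
    have hmono : StrictMono ns := strictMono_nat_of_lt_succ (fun i => by have := hgrow i; omega)
    have hzc : ∀ m : ℕ, z (-(((-(c m)).toNat : ℕ):ℤ)) = z (c m) := by
      intro m; congr 1; have := hc1 m; omega
    have hdist : ∀ i, dist x (z (-(ns i : ℤ))) < 1/(i+1) := by
      intro i
      cases i with
      | zero =>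
        rw [hns0, hzc 0]
        simpa using hc2 0
      | succ i =>
        rw [hnssucc, hzc (ns i + i + 1)]
        refine lt_of_lt_of_le (hc2 (ns i + i + 1)) ?_
        apply one_div_le_one_div_of_le
        · positivity
        · exact_mod_cast by omega
    refine ⟨?_, fun i => z (-(ns i : ℤ)), ns, hmono, ?_, ?_⟩
    · rw [omegaPt_traj hz, hω]; exact hxA
    · intro i
      rw [fullTraj_iter hz (ns i) (-(ns i : ℤ))]
      congr 1; omega
    · rw [Metric.tendsto_nhds]
      intro ε hε
      obtain ⟨k0, hk0⟩ := exists_nat_one_div_lt hε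
      rw [eventually_atTop]
      refine ⟨k0, fun i hi => ?_⟩
      rw [dist_comm]
      refine lt_of_lt_of_le (lt_of_lt_of_le (hdist i) ?_) hk0.le
      apply one_div_le_one_div_of_le
      · positivity
      · exact_mod_cast by omega

theorem stmt13 {X : Type*} [MetricSpace X] [CompactSpace X] (f : X → X)
    (hf : Continuous f)
    (hshad : ∀ u : ℤ → X, twoSidedAsymptotic f u → alphaZ u = omegaZ u →
      ∃ z : ℤ → X, fullTraj f z ∧ alphaZ z = alphaZ u ∧ omegaZ z = omegaZ u) :
    ∀ A : Set X, A.Nonempty → IsClosed A → chainTransitive f A →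
      ∃ x : X, gammaLimit f x = A := by
  intro A hA hAc hct
  obtain ⟨u, hu1, hu2, hu3⟩ := exists_pseudo f A hA hAc hct
  obtain ⟨z, hz1, hz2, hz3⟩ := hshad u hu1 (by rw [hu2, hu3])
  exact ⟨z 0, gamma_of_traj hz1 (by rw [hz2, hu2]) (by rw [hz3, hu3])⟩
end

section
/- Let (X,d) be a compact metric space and f: X → X continuous. If ⟨x_i⟩_{i∈ℤ} is a full trajectory with α(⟨x_i⟩) = ω(⟨x_i⟩) = A, then γ(x_0) = A. -/
open Filter Metric Topology Set

lemma traj_iter {X : Type*} {f : X → X} {u : ℤ → X} (hu : fullTraj f u) :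
    ∀ (n : ℕ) (i : ℤ), f^[n] (u i) = u (i + n) := by
  intro n
  induction n with
  | zero => intro i; simp
  | succ n ih =>
    intro i
    rw [Function.iterate_succ_apply, hu i, ih]
    congr 1
    push_cast
    ring

lemma imageEqAux {X : Type*} (u : ℤ → X) (M : ℕ) :
    (fun n : ℕ => u n) '' Set.Ioi M = u '' {n : ℤ | (M : ℤ) < n} := by
  ext x
  constructor
  · rintro ⟨n, hn, rfl⟩
    exact ⟨n, show (M : ℤ) < n by exact_mod_cast Set.mem_Ioi.mp hn, rfl⟩
  · rintro ⟨n, hn, rfl⟩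
    have hn' : (M : ℤ) < n := hn
    have hn0 : 0 ≤ n := le_of_lt (lt_of_le_of_lt (Int.ofNat_nonneg M) hn')
    refine ⟨n.toNat, Set.mem_Ioi.mpr (Int.lt_toNat.mpr hn'), ?_⟩
    simp [Int.toNat_of_nonneg hn0]

lemma omega_eq {X : Type*} [MetricSpace X] {f : X → X} {u : ℤ → X} (hu : fullTraj f u) :
    omegaPt f (u 0) = omegaZ u := by
  unfold omegaPt omegaSeq omegaZ
  apply Set.iInter_congr
  intro M
  rw [← imageEqAux]
  have h : (fun n : ℕ => f^[n] (u 0)) = fun n : ℕ => u n :=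
    funext fun n => by rw [traj_iter hu n 0, zero_add]
  rw [h]

theorem stmt14 {X : Type*} [MetricSpace X] [CompactSpace X] (f : X → X)
    (hf : Continuous f) (u : ℤ → X) (hu : fullTraj f u) (A : Set X)
    (ha : alphaZ u = A) (hw : omegaZ u = A) :
    gammaLimit f (u 0) = A := by
  ext y
  constructor
  · intro hy
    have := hy.1
    rwa [omega_eq hu, hw] at this
  · intro hy
    have hyo : y ∈ omegaPt f (u 0) := by rw [omega_eq hu, hw]; exact hy
    have hya : y ∈ alphaZ u := by rw [ha]; exact hy
    have key : ∀ M : ℕ, ∀ ε : ℝ, 0 < ε → ∃ m : ℕ, M < m ∧ dist y (u (-(m : ℤ))) < ε := by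
      intro M ε hε
      have h1 := Set.mem_iInter.mp hya M
      rw [Metric.mem_closure_iff] at h1
      obtain ⟨z, ⟨n, hn, rfl⟩, hz⟩ := h1 ε hε
      have hn' : n < -(M : ℤ) := hn
      refine ⟨n.natAbs, by omega, ?_⟩
      have : -(n.natAbs : ℤ) = n := by omega
      rwa [this]
    choose g hg1 hg2 using fun (M k : ℕ) => key M (1 / (k + 1)) (by positivity)
    set ns : ℕ → ℕ := fun k => Nat.rec (g 0 0) (fun k prev => g prev (k + 1)) k with hns
    have hsucc : ∀ k, ns (k + 1) = g (ns k) (k + 1) := fun k => rfl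
    have hmono : StrictMono ns := strictMono_nat_of_lt_succ fun k => by
      rw [hsucc]; exact hg1 (ns k) (k + 1)
    have hdist : ∀ k, dist y (u (-(ns k : ℤ))) < 1 / (k + 1) := by
      intro k
      cases k with
      | zero => exact hg2 0 0
      | succ k => rw [hsucc]; exact hg2 (ns k) (k + 1)
    refine ⟨hyo, fun k => u (-(ns k : ℤ)), ns, hmono, ?_, ?_⟩
    · intro i
      rw [traj_iter hu]
      simp
    · rw [Metric.tendsto_atTop]
      intro ε hε
      obtain ⟨N, hN⟩ := exists_nat_one_div_lt hε
      refine ⟨N, fun k hk => ?_⟩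
      rw [dist_comm]
      calc dist y (u (-(ns k : ℤ))) < 1 / (k + 1) := hdist k
        _ ≤ 1 / (N + 1) := by
            apply one_div_le_one_div_of_le (by positivity)
            exact_mod_cast Nat.succ_le_succ hk
        _ < ε := hN
end

section
/- Let X = ℝ/ℤ × ℝ/ℤ be the torus and f(x,y) = (x+α, y) for a fixed irrational α. Then for every δ > 0 there is a two-sided δ-pseudo-orbit ⟨x_i⟩_{i∈ℤ} whose α-limit set is ℝ/ℤ × {0} and whose ω-limit set is ℝ/ℤ × {1/2}; consequently (X,f) does not have two-sided cofinal orbital shadowing. -/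
open Filter Metric Topology Set

/-- Two-sided cofinal orbital shadowing. -/
def twoSidedCofinalOrbitalShadowing {X : Type*} [MetricSpace X] (f : X → X) : Prop :=
  ∀ ε > (0:ℝ), ∃ δ > (0:ℝ), ∀ x : ℤ → X, (∀ i, dist (f (x i)) (x (i + 1)) < δ) →
    ∃ z : ℤ → X, fullTraj f z ∧ ∀ K : ℕ, ∃ N : ℕ, K ≤ N ∧
      hausdorffDist (closure (z '' {n : ℤ | (N : ℤ) ≤ n}))
        (closure (x '' {n : ℤ | (N : ℤ) ≤ n})) < ε ∧
      hausdorffDist (closure (z '' {n : ℤ | n ≤ -(N : ℤ)}))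
        (closure (x '' {n : ℤ | n ≤ -(N : ℤ)})) < ε

/-- Rotation in the first coordinate of the torus. -/
noncomputable def torusRot (α : ℝ) :
    AddCircle (1:ℝ) × AddCircle (1:ℝ) → AddCircle (1:ℝ) × AddCircle (1:ℝ) :=
  fun p => (p.1 + (α : AddCircle (1:ℝ)), p.2)

/-!
The pseudo-orbit `climbingOrbit α (δ / 2)` rotates the first coordinate exactly and raises the
height by `δ / 2` per step, from `0` (for `n ≤ 0`) up to `1 / 2`, where it stays. Every half-orbit
of an irrational rotation is dense in the circle (in a compact group each `m • θ` is a cluster point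
of the forward multiples of `θ`), so its backward and forward tails close up to the horizontal
circles at heights `0` and `1 / 2`. A true trajectory of `torusRot α` has constant height `c`, so
both of its tails close up to the circle at height `c`. The Hausdorff distance between horizontal
circles is the distance between their heights, and `c` cannot be within `1 / 4` of both `0` and
`1 / 2`.
-/

theorem closure_image_prodMk_const {ι X Y : Type*} [TopologicalSpace X] [TopologicalSpace Y]
    [T1Space Y] (g : ι → X) (c : Y) (S : Set ι) :
    closure ((fun n => (g n, c)) '' S) = closure (g '' S) ×ˢ {c} := by
  rw [← closure_singleton, ← closure_prod_eq, prod_singleton, image_image]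

section RotationTails

variable {G Y : Type*} [AddGroup G] [TopologicalSpace G] [CompactSpace G]
  [IsTopologicalAddGroup G] [TopologicalSpace Y] [T1Space Y] {θ : G}

theorem dense_image_add_zsmul_Ici (hθ : DenseRange (· • θ : ℤ → G)) (a : G) (N : ℤ) :
    Dense ((fun n : ℤ => a + n • θ) '' Ici N) := by
  have hmem : ∀ m : ℤ, a + m • θ ∈ closure ((fun n : ℤ => a + n • θ) '' Ici N) := fun m =>
    have hm := mapClusterPt_atTop_zsmul_iff_nsmul.2 (mapClusterPt_self_zsmul_atTop_nsmul θ m)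
    mapClusterPt_atTop_iff_forall_mem_closure.1
      (hm.continuousAt_comp (continuous_const_add a).continuousAt) N
  have hdense : DenseRange (fun n : ℤ => a + n • θ) :=
    (Homeomorph.addLeft a).surjective.denseRange.comp hθ (continuous_const_add a)
  exact (hdense.mono (range_subset_iff.2 hmem)).of_closure

theorem dense_image_add_zsmul_Iic (hθ : DenseRange (· • θ : ℤ → G)) (a : G) (N : ℤ) :
    Dense ((fun n : ℤ => a + n • θ) '' Iic N) := by
  have hneg : DenseRange (· • -θ : ℤ → G) := by
    simpa [Function.comp_def] using
      hθ.comp neg_surjective.denseRange continuous_of_discreteTopology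
  convert dense_image_add_zsmul_Ici hneg a (-N) using 1
  rw [show (fun n : ℤ => a + n • -θ) = (fun n => a + n • θ) ∘ Neg.neg by funext; simp,
    image_comp, image_neg_eq_neg, neg_Ici, neg_neg]

theorem closure_image_Ici_add_zsmul_prodMk (hθ : DenseRange (· • θ : ℤ → G)) (a : G) (c : Y)
    (N : ℤ) : closure ((fun n : ℤ => (a + n • θ, c)) '' Ici N) = univ ×ˢ {c} := by
  rw [closure_image_prodMk_const (fun n : ℤ => a + n • θ),
    (dense_image_add_zsmul_Ici hθ a N).closure_eq]

theorem closure_image_Iic_add_zsmul_prodMk (hθ : DenseRange (· • θ : ℤ → G)) (a : G) (c : Y)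
    (N : ℤ) : closure ((fun n : ℤ => (a + n • θ, c)) '' Iic N) = univ ×ˢ {c} := by
  rw [closure_image_prodMk_const (fun n : ℤ => a + n • θ),
    (dense_image_add_zsmul_Iic hθ a N).closure_eq]

end RotationTails

section LimitSets

variable {X : Type*} [MetricSpace X] {u : ℤ → X} {A : Set X}

theorem omegaZ_eq_of_eventually_closure_Ici
    (h : ∀ᶠ N : ℕ in atTop, closure (u '' {n : ℤ | (N : ℤ) ≤ n}) = A) : omegaZ u = A := by
  obtain ⟨N₀, hN₀⟩ := eventually_atTop.1 h
  have tail_succ : ∀ M : ℕ, {n : ℤ | (M : ℤ) < n} = {n : ℤ | ((M + 1 : ℕ) : ℤ) ≤ n} := by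
    intro M; ext n; simp only [mem_ofPred_eq]; omega
  apply subset_antisymm
  · exact (iInter_subset _ N₀).trans (tail_succ N₀ ▸ (hN₀ _ (by omega)).le)
  · refine subset_iInter fun M => ?_
    rw [← hN₀ (max (M + 1) N₀) (le_max_right _ _), tail_succ]
    exact closure_mono (image_mono fun n hn => by simp only [mem_ofPred_eq] at hn ⊢; omega)

theorem alphaZ_eq_of_eventually_closure_Iic
    (h : ∀ᶠ N : ℕ in atTop, closure (u '' {n : ℤ | n ≤ -(N : ℤ)}) = A) : alphaZ u = A := by
  obtain ⟨N₀, hN₀⟩ := eventually_atTop.1 h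
  have tail_succ : ∀ M : ℕ, {n : ℤ | n < -(M : ℤ)} = {n : ℤ | n ≤ -((M + 1 : ℕ) : ℤ)} := by
    intro M; ext n; simp only [mem_ofPred_eq]; omega
  apply subset_antisymm
  · exact (iInter_subset _ N₀).trans (tail_succ N₀ ▸ (hN₀ _ (by omega)).le)
  · refine subset_iInter fun M => ?_
    rw [← hN₀ (max (M + 1) N₀) (le_max_right _ _), tail_succ]
    exact closure_mono (image_mono fun n hn => by simp only [mem_ofPred_eq] at hn ⊢; omega)

end LimitSets

theorem hausdorffDist_prod_singleton {X Y : Type*} [MetricSpace X] [MetricSpace Y]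
    {s : Set X} (hs : s.Nonempty) (c c' : Y) :
    hausdorffDist (s ×ˢ {c}) (s ×ˢ {c'}) = dist c c' := by
  have hfin : hausdorffEDist (s ×ˢ {c}) (s ×ˢ {c'}) ≠ ⊤ := by
    refine ne_top_of_le_ne_top (edist_ne_top c c') (hausdorffEDist_le_of_mem_edist ?_ ?_)
    · rintro ⟨a, b⟩ ⟨ha, rfl : b = c⟩
      exact ⟨(a, c'), ⟨ha, rfl⟩, by simp [Prod.edist_eq]⟩
    · rintro ⟨a, b⟩ ⟨ha, rfl : b = c'⟩
      exact ⟨(a, c), ⟨ha, rfl⟩, by simp [Prod.edist_eq, edist_comm]⟩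
  apply le_antisymm
  · refine hausdorffDist_le_of_mem_dist dist_nonneg ?_ ?_
    · rintro ⟨a, b⟩ ⟨ha, rfl : b = c⟩
      exact ⟨(a, c'), ⟨ha, rfl⟩, by simp [Prod.dist_eq]⟩
    · rintro ⟨a, b⟩ ⟨ha, rfl : b = c'⟩
      exact ⟨(a, c), ⟨ha, rfl⟩, by simp [Prod.dist_eq, dist_comm]⟩
  · obtain ⟨a, ha⟩ := hs
    calc dist c c' ≤ infDist (a, c) (s ×ˢ {c'}) := by
          refine (le_infDist (⟨(a, c'), ha, rfl⟩ : (s ×ˢ {c'}).Nonempty)).2 ?_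
          rintro ⟨b, d⟩ ⟨-, rfl : d = c'⟩
          rw [Prod.dist_eq]
          exact le_max_right _ _
      _ ≤ hausdorffDist (s ×ˢ {c}) (s ×ˢ {c'}) := infDist_le_hausdorffDist_of_mem ⟨ha, rfl⟩ hfin

theorem eq_add_zsmul_of_fullTraj_add_right {G : Type*} [AddGroup G] {v : G} {z : ℤ → G}
    (hz : fullTraj (· + v) z) (n : ℤ) : z n = z 0 + n • v := by
  induction n using Int.induction_on with
  | zero => simp
  | succ i ih => rw [← hz i, ih, add_one_zsmul]; exact add_assoc _ _ _
  | pred i ih =>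
    have h : z (-i - 1) + v = z (-i) := by simpa using hz (-i - 1)
    rw [eq_sub_of_add_eq h, ih, sub_one_zsmul, ← sub_eq_add_neg, add_sub_assoc]

theorem AddCircle.dist_coe_le_abs_sub (p a b : ℝ) : dist (a : AddCircle p) b ≤ |a - b| := by
  rw [dist_eq_norm, ← AddCircle.coe_sub]
  exact QuotientAddGroup.norm_mk_le_norm

theorem Irrational.denseRange_zsmul_coe {α : ℝ} (hα : Irrational α) :
    DenseRange (· • (α : AddCircle (1 : ℝ)) : ℤ → AddCircle (1 : ℝ)) :=
  AddCircle.denseRange_zsmul_coe_iff.2 (by rwa [div_one])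

theorem torusRot_eq_add_right (α : ℝ) : torusRot α = (· + ((α : AddCircle (1 : ℝ)), 0)) := by
  funext p
  ext <;> simp [torusRot]

theorem exists_closure_tails_eq_of_fullTraj_torusRot {α : ℝ} (hα : Irrational α)
    {z : ℤ → AddCircle (1 : ℝ) × AddCircle (1 : ℝ)} (hz : fullTraj (torusRot α) z) :
    ∃ c : AddCircle (1 : ℝ), ∀ N : ℤ,
      closure (z '' Ici N) = univ ×ˢ {c} ∧ closure (z '' Iic N) = univ ×ˢ {c} := by
  rw [torusRot_eq_add_right] at hz
  have hzn : z = fun n : ℤ => ((z 0).1 + n • (α : AddCircle (1 : ℝ)), (z 0).2) := by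
    funext n
    rw [eq_add_zsmul_of_fullTraj_add_right hz n]
    ext <;> simp
  refine ⟨(z 0).2, fun N => ?_⟩
  rw [hzn]
  exact ⟨closure_image_Ici_add_zsmul_prodMk hα.denseRange_zsmul_coe _ _ N,
    closure_image_Iic_add_zsmul_prodMk hα.denseRange_zsmul_coe _ _ N⟩

noncomputable def climbingOrbit (α s : ℝ) (n : ℤ) : AddCircle (1 : ℝ) × AddCircle (1 : ℝ) :=
  (n • (α : AddCircle (1 : ℝ)), ((projIcc 0 (1 / 2) (by norm_num) (n * s) : ℝ) : AddCircle (1 : ℝ)))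

theorem dist_torusRot_climbingOrbit_le (α s : ℝ) (n : ℤ) :
    dist (torusRot α (climbingOrbit α s n)) (climbingOrbit α s (n + 1)) ≤ |s| := by
  simp only [torusRot, climbingOrbit, Prod.dist_eq, add_one_zsmul, dist_self]
  refine max_le (abs_nonneg _) ((AddCircle.dist_coe_le_abs_sub _ _ _).trans ?_)
  refine (abs_projIcc_sub_projIcc _).trans_eq ?_
  rw [show (n : ℝ) * s - ((n + 1 : ℤ) : ℝ) * s = -s by push_cast; ring, abs_neg]

theorem closure_climbingOrbit_Iic {α s : ℝ} (hα : Irrational α) (hs : 0 ≤ s) {K : ℤ}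
    (hK : K ≤ 0) :
    closure (climbingOrbit α s '' Iic K) = univ ×ˢ {((0 : ℝ) : AddCircle (1 : ℝ))} := by
  rw [← closure_image_Iic_add_zsmul_prodMk hα.denseRange_zsmul_coe 0 _ K]
  refine congrArg closure (image_congr fun n (hn : n ≤ K) => ?_)
  have hns : (n : ℝ) * s ≤ 0 :=
    mul_nonpos_of_nonpos_of_nonneg (by exact_mod_cast hn.trans hK) hs
  simp [climbingOrbit, projIcc_of_le_left _ hns]

theorem eventually_closure_climbingOrbit_Ici {α s : ℝ} (hα : Irrational α) (hs : 0 < s) :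
    ∀ᶠ N : ℕ in atTop, closure (climbingOrbit α s '' Ici (N : ℤ)) =
      univ ×ˢ {((1 / 2 : ℝ) : AddCircle (1 : ℝ))} := by
  filter_upwards [(tendsto_natCast_atTop_atTop.atTop_mul_const hs).eventually_ge_atTop (1 / 2)]
    with N hN
  rw [← closure_image_Ici_add_zsmul_prodMk hα.denseRange_zsmul_coe 0 _ N]
  refine congrArg closure (image_congr fun n (hn : (N : ℤ) ≤ n) => ?_)
  have hns : 1 / 2 ≤ (n : ℝ) * s :=
    hN.trans (mul_le_mul_of_nonneg_right (by exact_mod_cast hn) hs.le)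
  simp [climbingOrbit, projIcc_of_right_le _ hns]

theorem stmt15 (α : ℝ) (hα : Irrational α) :
    (∀ δ > (0:ℝ), ∃ x : ℤ → AddCircle (1:ℝ) × AddCircle (1:ℝ),
      (∀ i, dist (torusRot α (x i)) (x (i + 1)) < δ) ∧
      alphaZ x = Set.univ ×ˢ {((0:ℝ) : AddCircle (1:ℝ))} ∧
      omegaZ x = Set.univ ×ˢ {((1/2 : ℝ) : AddCircle (1:ℝ))}) ∧
    ¬ twoSidedCofinalOrbitalShadowing (torusRot α) := by
  have hpseudo : ∀ δ > (0 : ℝ), ∀ i,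
      dist (torusRot α (climbingOrbit α (δ / 2) i)) (climbingOrbit α (δ / 2) (i + 1)) < δ :=
    fun δ hδ i => (dist_torusRot_climbingOrbit_le α _ i).trans_lt
      (by rw [abs_of_pos (half_pos hδ)]; exact half_lt_self hδ)
  refine ⟨fun δ hδ => ⟨climbingOrbit α (δ / 2), hpseudo δ hδ,
    alphaZ_eq_of_eventually_closure_Iic (.of_forall fun N =>
      closure_climbingOrbit_Iic hα (by positivity) (by omega)),
    omegaZ_eq_of_eventually_closure_Ici (eventually_closure_climbingOrbit_Ici hα (by positivity))⟩,
    fun hshadow => ?_⟩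
  obtain ⟨δ, hδ, hshadow⟩ := hshadow (1 / 4) (by norm_num)
  obtain ⟨z, hz, hK⟩ := hshadow _ (hpseudo δ hδ)
  obtain ⟨c, hc⟩ := exists_closure_tails_eq_of_fullTraj_torusRot hα hz
  obtain ⟨N₀, hN₀⟩ := eventually_atTop.1 (eventually_closure_climbingOrbit_Ici hα (half_pos hδ))
  obtain ⟨N, hN, hfwd, hbwd⟩ := hK N₀
  simp only [Ici_def, Iic_def] at hfwd hbwd
  rw [(hc N).1, hN₀ N hN, hausdorffDist_prod_singleton univ_nonempty] at hfwd
  rw [(hc _).2, closure_climbingOrbit_Iic hα (half_pos hδ).le (by omega),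
    hausdorffDist_prod_singleton univ_nonempty] at hbwd
  have hhalf : dist ((0 : ℝ) : AddCircle (1 : ℝ)) ((1 / 2 : ℝ) : AddCircle (1 : ℝ)) = 1 / 2 := by
    rw [dist_comm, dist_eq_norm, ← AddCircle.coe_sub, sub_zero, AddCircle.norm_half_period_eq]
    norm_num
  linarith [dist_triangle_left ((0 : ℝ) : AddCircle (1 : ℝ)) ((1 / 2 : ℝ) : AddCircle (1 : ℝ)) c]
end

section
/- Consider the map f: [0,1] → [0,1], f(x) = x². The two-sided sequence ⟨x_i⟩_{i∈ℤ} with x_i = 0 for i ≤ 0 and x_i = 1 for i > 0 is a two-sided asymptotic pseudo-orbit with ω(⟨x_i⟩) = {1} and α(⟨x_i⟩) = {0}, yet there is no full trajectory ⟨z_i⟩_{i∈ℤ} of f with ω(⟨z_i⟩) = {1} and α(⟨z_i⟩) = {0}. Hence f does not have two-sided orbital limit shadowing. -/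
open Filter Metric Topology Set

/-- The squaring map on `[0,1]`. -/
def sqMap : Set.Icc (0:ℝ) 1 → Set.Icc (0:ℝ) 1 :=
  fun x => ⟨x.1 ^ 2, ⟨sq_nonneg _, by nlinarith [x.2.1, x.2.2]⟩⟩

/-- The two-sided sequence which is `0` for `i ≤ 0` and `1` for `i > 0`. -/
def stepSeq : ℤ → Set.Icc (0:ℝ) 1 :=
  fun i => if i ≤ 0 then ⟨0, by norm_num⟩ else ⟨1, by norm_num⟩
noncomputable abbrev pOne : Set.Icc (0:ℝ) 1 := ⟨1, by norm_num⟩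
noncomputable abbrev pZero : Set.Icc (0:ℝ) 1 := ⟨0, by norm_num⟩

lemma sqMap_one : sqMap pOne = pOne := by
  simp [sqMap, pOne]

lemma sqMap_zero : sqMap pZero = pZero := by
  simp [sqMap, pZero]

lemma stepSeq_pos {i : ℤ} (hi : 0 < i) : stepSeq i = pOne := by
  simp [stepSeq, show ¬ i ≤ 0 by omega]

lemma stepSeq_nonpos {i : ℤ} (hi : i ≤ 0) : stepSeq i = pZero := by
  simp [stepSeq, hi]

lemma step_asym : twoSidedAsymptotic sqMap stepSeq := by
  constructor
  · apply Tendsto.congr' _ (tendsto_const_nhds)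
    filter_upwards [eventually_ge_atTop (1:ℤ)] with i hi
    rw [stepSeq_pos (by omega), stepSeq_pos (by omega), sqMap_one, dist_self]
  · apply Tendsto.congr' _ (tendsto_const_nhds)
    filter_upwards [eventually_le_atBot (-1:ℤ)] with i hi
    rw [stepSeq_nonpos (by omega), stepSeq_nonpos (by omega), sqMap_zero, dist_self]

lemma step_omega : omegaZ stepSeq = {pOne} := by
  apply Set.eq_singleton_iff_unique_mem.mpr
  constructor
  · simp only [omegaZ, Set.mem_iInter]
    intro M
    exact subset_closure ⟨(M:ℤ)+1, by simp, stepSeq_pos (by positivity)⟩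
  · intro x hx
    simp only [omegaZ, Set.mem_iInter] at hx
    have h0 := hx 0
    have himg : stepSeq '' {n : ℤ | ((0:ℕ):ℤ) < n} ⊆ {pOne} := by
      rintro y ⟨n, hn, rfl⟩
      simp only [Set.mem_setOf_eq, Nat.cast_zero] at hn
      simp [stepSeq_pos hn]
    have := closure_mono himg
    rw [closure_singleton] at this
    exact this h0

lemma step_alpha : alphaZ stepSeq = {pZero} := by
  apply Set.eq_singleton_iff_unique_mem.mpr
  constructor
  · simp only [alphaZ, Set.mem_iInter]
    intro M
    refine subset_closure ⟨-((M:ℤ)+1), by simp [Set.mem_setOf_eq],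
      stepSeq_nonpos (by omega)⟩
  · intro x hx
    simp only [alphaZ, Set.mem_iInter] at hx
    have h0 := hx 0
    have himg : stepSeq '' {n : ℤ | n < -((0:ℕ):ℤ)} ⊆ {pZero} := by
      rintro y ⟨n, hn, rfl⟩
      simp only [Set.mem_setOf_eq, Nat.cast_zero, neg_zero] at hn
      simp [stepSeq_nonpos (le_of_lt hn)]
    have := closure_mono himg
    rw [closure_singleton] at this
    exact this h0

lemma no_traj : ¬ ∃ z : ℤ → Set.Icc (0:ℝ) 1, fullTraj sqMap z ∧
    omegaZ z = {pOne} ∧ alphaZ z = {pZero} := by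
  rintro ⟨z, hz, hω, hα⟩
  rcases lt_or_eq_of_le (z 0).2.2 with hlt | heq
  · -- (z 0).1 < 1 : forward values stay ≤ z 0
    have hmono : ∀ k : ℕ, ((z (k:ℤ) : ℝ)) ≤ ((z 0 : ℝ)) := by
      intro k
      induction k with
      | zero => simp
      | succ k ih =>
        have h1 : sqMap (z (k:ℤ)) = z ((k:ℤ)+1) := hz k
        have h2 : ((z ((k:ℤ)+1) : ℝ)) = ((z (k:ℤ) : ℝ))^2 := by
          rw [← h1]; rfl
        have hb1 := (z (k:ℤ)).2.1
        have hb2 := (z (k:ℤ)).2.2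
        have : ((z (((k:ℕ)+1 : ℕ):ℤ) : ℝ)) = ((z ((k:ℤ)+1) : ℝ)) := by push_cast; ring_nf
        rw [this, h2]
        nlinarith
    have h1mem : pOne ∈ omegaZ z := by rw [hω]; rfl
    simp only [omegaZ, Set.mem_iInter] at h1mem
    have h0 := h1mem 0
    set S : Set (Set.Icc (0:ℝ) 1) := {x | (x : ℝ) ≤ ((z 0 : ℝ))} with hS
    have hSclosed : IsClosed S := isClosed_le continuous_subtype_val continuous_const
    have himg : z '' {n : ℤ | ((0:ℕ):ℤ) < n} ⊆ S := by
      rintro y ⟨n, hn, rfl⟩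
      simp only [Set.mem_setOf_eq, Nat.cast_zero] at hn
      have hn' : n = ((n.toNat : ℕ) : ℤ) := (Int.toNat_of_nonneg (le_of_lt hn)).symm
      rw [hS, Set.mem_setOf_eq, hn']
      exact hmono n.toNat
    have h1S : pOne ∈ S := (closure_minimal himg hSclosed) h0
    rw [hS, Set.mem_setOf_eq] at h1S
    simp only [pOne] at h1S
    linarith
  · -- (z 0).1 = 1 : backward values are all 1
    have hback : ∀ k : ℕ, z (-(k:ℤ)) = pOne := by
      intro k
      induction k with
      | zero => simpa using Subtype.ext heq
      | succ k ih =>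
        have h1 : sqMap (z (-((k:ℤ)+1))) = z (-((k:ℤ)+1)+1) := hz _
        have h2 : (-((k:ℤ)+1)+1) = -(k:ℤ) := by ring
        rw [h2, ih] at h1
        have h3 : ((z (-((k:ℤ)+1)) : ℝ))^2 = 1 := congrArg Subtype.val h1
        have hb1 := (z (-((k:ℤ)+1))).2.1
        have hb2 := (z (-((k:ℤ)+1))).2.2
        have hval : ((z (-((k:ℤ)+1)) : ℝ)) = 1 := by nlinarith
        have hcast : (-(((k:ℕ)+1 : ℕ):ℤ)) = -((k:ℤ)+1) := by push_cast; ring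
        rw [hcast]
        exact Subtype.ext hval
    have h1mem : pOne ∈ alphaZ z := by
      simp only [alphaZ, Set.mem_iInter]
      intro M
      refine subset_closure ⟨-((M:ℤ)+1), by simp [Set.mem_setOf_eq], ?_⟩
      have hcast : (-((M:ℤ)+1)) = -(((M+1 : ℕ)):ℤ) := by push_cast; ring
      rw [hcast]
      exact hback (M+1)
    rw [hα] at h1mem
    have : ((1:ℝ)) = 0 := congrArg Subtype.val h1mem
    norm_num at this

theorem stmt16 :
    twoSidedAsymptotic sqMap stepSeq ∧
    omegaZ stepSeq = {(⟨1, by norm_num⟩ : Set.Icc (0:ℝ) 1)} ∧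
    alphaZ stepSeq = {(⟨0, by norm_num⟩ : Set.Icc (0:ℝ) 1)} ∧
    (¬ ∃ z : ℤ → Set.Icc (0:ℝ) 1, fullTraj sqMap z ∧
      omegaZ z = {(⟨1, by norm_num⟩ : Set.Icc (0:ℝ) 1)} ∧
      alphaZ z = {(⟨0, by norm_num⟩ : Set.Icc (0:ℝ) 1)}) ∧
    ¬ (∀ u : ℤ → Set.Icc (0:ℝ) 1, twoSidedAsymptotic sqMap u →
      ∃ z : ℤ → Set.Icc (0:ℝ) 1, fullTraj sqMap z ∧
        alphaZ z = alphaZ u ∧ omegaZ z = omegaZ u) := by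
  refine ⟨step_asym, step_omega, step_alpha, no_traj, ?_⟩
  intro h
  obtain ⟨z, hz, hα, hω⟩ := h stepSeq step_asym
  rw [step_alpha] at hα
  rw [step_omega] at hω
  exact no_traj ⟨z, hz, hω, hα⟩
end

section
/- Let X = ⋃_{n≥0} X_n where X_0 = ℝ/ℤ × {0} and X_n = ℝ/ℤ × {1/n} for n ≥ 1, with f acting on each circle by x ↦ x + α for a fixed irrational α. Then (X,f) does not have δ-restricted two-sided orbital limit shadowing: for every δ > 0 there is a two-sided asymptotic δ-pseudo-orbit ⟨x_i⟩_{i∈ℤ} admitting no full trajectory ⟨z_i⟩ with α(⟨z_i⟩) = α(⟨x_i⟩) and ω(⟨z_i⟩) = ω(⟨x_i⟩). -/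
open Filter Metric Topology Set

/-- The union of circles at heights `0` and `1/n`, realised as a product with a subtype. -/
abbrev circSpace : Type :=
  AddCircle (1:ℝ) × {y : ℝ // y = 0 ∨ ∃ n : ℕ, 0 < n ∧ y = 1 / (n : ℝ)}

/-- Rotation by `α` on each circle. -/
noncomputable def circMap (α : ℝ) : circSpace → circSpace :=
  fun p => (p.1 + (α : AddCircle (1:ℝ)), p.2)

/-! The rotation preserves the height of a point, so a full trajectory stays on one circle and
both of its limit sets lie on that circle. The pseudo-orbit that follows the orbit of `0` on the
circle at height `1/(n+1) < δ` in negative time and on the circle at height `0` in positive time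
has exactly one defect, of size `1/(n+1)`, and nonempty limit sets (the space is compact) on two
different circles, so no trajectory can have the same limit sets. -/

section LimitSets

variable {X : Type*} [MetricSpace X]

lemma alphaZ_eq_omegaZ_neg (u : ℤ → X) : alphaZ u = omegaZ (fun n => u (-n)) := by
  unfold alphaZ omegaZ
  congr! 3 with M
  ext x
  constructor
  · rintro ⟨n, hn, rfl⟩
    exact ⟨-n, by simp only [mem_ofPred_eq] at hn ⊢; omega, by simp⟩
  · rintro ⟨n, hn, rfl⟩
    exact ⟨-n, by simp only [mem_ofPred_eq] at hn ⊢; omega, rfl⟩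

lemma omegaZ_subset_of_eventually {u : ℤ → X} {s : Set X} (hs : IsClosed s)
    (hu : ∀ᶠ n in atTop, u n ∈ s) : omegaZ u ⊆ s := by
  obtain ⟨N, hN⟩ := eventually_atTop.mp hu
  refine (iInter_subset _ N.toNat).trans (closure_minimal ?_ hs)
  rintro _ ⟨n, hn, rfl⟩
  exact hN n (by simp only [mem_ofPred_eq] at hn; omega)

lemma alphaZ_subset_of_eventually {u : ℤ → X} {s : Set X} (hs : IsClosed s)
    (hu : ∀ᶠ n in atBot, u n ∈ s) : alphaZ u ⊆ s :=
  alphaZ_eq_omegaZ_neg u ▸ omegaZ_subset_of_eventually hs (tendsto_neg_atTop_atBot.eventually hu)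

lemma omegaZ_nonempty [CompactSpace X] (u : ℤ → X) : (omegaZ u).Nonempty := by
  refine isClosed_closure.isCompact.nonempty_iInter_of_sequence_nonempty_isCompact_isClosed _
    (fun M => closure_mono (image_mono fun n (hn : (M + 1 : ℕ) < n) => ?_))
    (fun M => ⟨u (M + 1), subset_closure ⟨M + 1, by simp, rfl⟩⟩) fun _ => isClosed_closure
  show (M : ℤ) < n
  omega

lemma alphaZ_nonempty [CompactSpace X] (u : ℤ → X) : (alphaZ u).Nonempty :=
  alphaZ_eq_omegaZ_neg u ▸ omegaZ_nonempty _

end LimitSets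

lemma fullTraj.apply_eq_apply_zero {X Y : Type*} {f : X → X} {z : ℤ → X} (hz : fullTraj f z)
    {g : X → Y} (hg : ∀ x, g (f x) = g x) (i : ℤ) : g (z i) = g (z 0) := by
  induction i using Int.induction_on with
  | zero => rfl
  | succ i ih => rw [← hz, hg, ih]
  | pred i ih => rw [← ih, ← hg, hz, sub_add_cancel]

abbrev circHeights : Type := {y : ℝ // y = 0 ∨ ∃ n : ℕ, 0 < n ∧ y = 1 / (n : ℝ)}

lemma circHeights_eq_insert_range :
    {y : ℝ | y = 0 ∨ ∃ n : ℕ, 0 < n ∧ y = 1 / (n : ℝ)} =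
      insert 0 (range fun n : ℕ => 1 / ((n : ℝ) + 1)) := by
  ext y
  refine or_congr_right ⟨?_, ?_⟩
  · rintro ⟨n, hn, rfl⟩
    refine ⟨n - 1, ?_⟩
    simp only [Nat.cast_pred hn, sub_add_cancel]
  · rintro ⟨n, rfl⟩
    exact ⟨n + 1, n.succ_pos, by push_cast; rfl⟩

instance : CompactSpace circHeights := by
  have h : IsCompact {y : ℝ | y = 0 ∨ ∃ n : ℕ, 0 < n ∧ y = 1 / (n : ℝ)} := by
    rw [circHeights_eq_insert_range]
    exact tendsto_one_div_add_atTop_nhds_zero_nat.isCompact_insert_range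
  exact isCompact_iff_compactSpace.mp h

noncomputable def circHeights.inv_succ (n : ℕ) : circHeights :=
  ⟨1 / ((n : ℝ) + 1), Or.inr ⟨n + 1, n.succ_pos, by push_cast; rfl⟩⟩

noncomputable def jumpOrbit (α : ℝ) (c : circHeights) (i : ℤ) : circSpace :=
  (i • (α : AddCircle (1:ℝ)), if 0 ≤ i then ⟨0, Or.inl rfl⟩ else c)

lemma circMap_jumpOrbit (α : ℝ) (c : circHeights) {i : ℤ} (hi : i ≠ -1) :
    circMap α (jumpOrbit α c i) = jumpOrbit α c (i + 1) := by
  have hsign : (0 ≤ i ↔ 0 ≤ i + 1) := by omega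
  simp only [circMap, jumpOrbit, add_zsmul, one_zsmul, hsign]

lemma dist_circMap_jumpOrbit_le (α : ℝ) (c : circHeights) (i : ℤ) :
    dist (circMap α (jumpOrbit α c i)) (jumpOrbit α c (i + 1)) ≤ |(c : ℝ)| := by
  rcases eq_or_ne i (-1) with rfl | hi
  · simp [Prod.dist_eq, circMap, jumpOrbit, Subtype.dist_eq]
  · rw [circMap_jumpOrbit α c hi, dist_self]
    exact abs_nonneg _

lemma twoSidedAsymptotic_jumpOrbit (α : ℝ) (c : circHeights) :
    twoSidedAsymptotic (circMap α) (jumpOrbit α c) := by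
  have hzero : ∀ i ≠ -1, dist (circMap α (jumpOrbit α c i)) (jumpOrbit α c (i + 1)) = 0 :=
    fun i hi => by rw [circMap_jumpOrbit α c hi, dist_self]
  refine ⟨tendsto_const_nhds.congr' ?_, tendsto_const_nhds.congr' ?_⟩
  · filter_upwards [eventually_ge_atTop 0] with i hi using (hzero i (by omega)).symm
  · filter_upwards [eventually_le_atBot (-2)] with i hi using (hzero i (by omega)).symm

lemma omegaZ_jumpOrbit_subset (α : ℝ) (c : circHeights) :
    omegaZ (jumpOrbit α c) ⊆ Prod.snd ⁻¹' {⟨0, Or.inl rfl⟩} :=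
  omegaZ_subset_of_eventually (isClosed_singleton.preimage continuous_snd) <| by
    filter_upwards [eventually_ge_atTop 0] with i hi
    simp [jumpOrbit, hi]

lemma alphaZ_jumpOrbit_subset (α : ℝ) (c : circHeights) :
    alphaZ (jumpOrbit α c) ⊆ Prod.snd ⁻¹' {c} :=
  alphaZ_subset_of_eventually (isClosed_singleton.preimage continuous_snd) <| by
    filter_upwards [eventually_lt_atBot 0] with i hi
    simp [jumpOrbit, hi.not_ge]

theorem stmt18_general (α : ℝ) :
    ∀ δ > (0:ℝ), ∃ x : ℤ → circSpace,
      (∀ i, dist (circMap α (x i)) (x (i + 1)) < δ) ∧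
      twoSidedAsymptotic (circMap α) x ∧
      ¬ ∃ z : ℤ → circSpace, fullTraj (circMap α) z ∧
        alphaZ z = alphaZ x ∧ omegaZ z = omegaZ x := by
  intro δ hδ
  obtain ⟨n, hn⟩ := exists_nat_one_div_lt hδ
  set c := circHeights.inv_succ n
  have hc_pos : (0 : ℝ) < c := Nat.one_div_pos_of_nat
  have hc : |(c : ℝ)| < δ := by rwa [abs_of_pos hc_pos]
  refine ⟨jumpOrbit α c, fun i => (dist_circMap_jumpOrbit_le α c i).trans_lt hc,
    twoSidedAsymptotic_jumpOrbit α c, ?_⟩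
  rintro ⟨z, hz, hzα, hzω⟩
  have hz_height : ∀ i, z i ∈ Prod.snd ⁻¹' {(z 0).2} := hz.apply_eq_apply_zero fun _ => rfl
  have hclosed : IsClosed (Prod.snd ⁻¹' {(z 0).2} : Set circSpace) :=
    isClosed_singleton.preimage continuous_snd
  obtain ⟨a, ha⟩ := alphaZ_nonempty (jumpOrbit α c)
  obtain ⟨b, hb⟩ := omegaZ_nonempty (jumpOrbit α c)
  have ha_z : a.2 = (z 0).2 :=
    alphaZ_subset_of_eventually hclosed (.of_forall hz_height) (hzα ▸ ha)
  have hb_z : b.2 = (z 0).2 :=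
    omegaZ_subset_of_eventually hclosed (.of_forall hz_height) (hzω ▸ hb)
  have hc0 : c = ⟨0, Or.inl rfl⟩ := by
    rw [← alphaZ_jumpOrbit_subset α c ha, ha_z, ← hb_z, omegaZ_jumpOrbit_subset α c hb]
  exact hc_pos.ne' (congrArg Subtype.val hc0)

theorem stmt18 (α : ℝ) (hα : Irrational α) :
    ∀ δ > (0:ℝ), ∃ x : ℤ → circSpace,
      (∀ i, dist (circMap α (x i)) (x (i + 1)) < δ) ∧
      twoSidedAsymptotic (circMap α) x ∧
      ¬ ∃ z : ℤ → circSpace, fullTraj (circMap α) z ∧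
        alphaZ z = alphaZ x ∧ omegaZ z = omegaZ x :=
  stmt18_general α
end
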